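/- arXiv:1809.08302 — 3 statements merged into one kernel-verified Lean document; each statement's English description precedes it below -/
import Mathlib

section
/- For all n and k: Q̃_{n,k}(x,u) = ½ [1, (x − x̄_k)ᵀ, (u − ū_k)ᵀ] Γ̃_{n,k} [1; x − x̄_k; u − ū_k] and Ṽ_{n,k}(x) = ½ [1, (x − x̄_k)ᵀ] S̃_{n,k} [1; x − x̄_k], where Γ̃_{n,k} and S̃_{n,k} are the matrices produced by the DDP backward recursion at ū. -/
open Matrix BigOperators Filter

noncomputable section

namespace DynGame

/-- joint input coordinate index: player `n`, coordinate `i < m n` -/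
abbrev UIdx (N : ℕ) (m : Fin N → ℕ) := (n : Fin N) × Fin (m n)
/-- state vector -/
abbrev Stt (nx : ℕ) := Fin nx → ℝ
/-- joint input vector -/
abbrev Inp (N : ℕ) (m : Fin N → ℕ) := UIdx N m → ℝ
/-- input sequence over times 0,…,T -/
abbrev Seq (T N : ℕ) (m : Fin N → ℕ) := Fin (T+1) → Inp N m
/-- joint (state, input) index, of size nx + nu -/
abbrev ZIdx (nx N : ℕ) (m : Fin N → ℕ) := Fin nx ⊕ UIdx N m
/-- extended index of size 1 + nx + nu -/
abbrev Ix (nx N : ℕ) (m : Fin N → ℕ) := Unit ⊕ ZIdx nx N m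
/-- extended state index of size 1 + nx -/
abbrev Jx (nx : ℕ) := Unit ⊕ Fin nx

/-- problem data: dynamics, stage costs, initial state -/
structure Setup (T nx N : ℕ) (m : Fin N → ℕ) where
  f : ℕ → Stt nx → Inp N m → Stt nx
  c : Fin N → ℕ → Stt nx → Inp N m → ℝ
  x0 : Stt nx

variable {T nx N : ℕ} {m : Fin N → ℕ}

/-- extend an input sequence to all of ℕ (by zero beyond T) -/
def extSeq (u : Seq T N m) : ℕ → Inp N m := fun k => if h : k < T + 1 then u ⟨k, h⟩ else 0

/-- trajectory generated by input sequence `u` -/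
def traj (P : Setup T nx N m) (u : Seq T N m) : ℕ → Stt nx
  | 0 => P.x0
  | k + 1 => P.f k (traj P u k) (extSeq u k)

/-- player `n`'s total cost -/
def J (P : Setup T nx N m) (n : Fin N) (u : Seq T N m) : ℝ :=
  ∑ k ∈ Finset.range (T + 1), P.c n k (traj P u k) (extSeq u k)

/-- stacked vector of the partial gradients ∂Jₙ/∂u_{n,:} -/
def calJ (P : Setup T nx N m) (u : Seq T N m) : Seq T N m :=
  fun k p => fderiv ℝ (J P p.1) u (Pi.single k (Pi.single p 1))

/-- dynamics as a function of the joint (state,input) pair -/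
def fpair (P : Setup T nx N m) (k : ℕ) : Stt nx × Inp N m → Stt nx := fun z => P.f k z.1 z.2

/-- cost as a function of the joint (state,input) pair -/
def cpair (P : Setup T nx N m) (n : Fin N) (k : ℕ) : Stt nx × Inp N m → ℝ := fun z => P.c n k z.1 z.2

/-- nominal (state,input) pair at time k -/
def zbar (P : Setup T nx N m) (ub : Seq T N m) (k : ℕ) : Stt nx × Inp N m :=
  (traj P ub k, extSeq ub k)

/-- coordinate basis vector of the joint (state,input) space -/
def zbasis (w : ZIdx nx N m) : Stt nx × Inp N m :=
  Sum.elim (fun i => (Pi.single i 1, 0)) (fun p => ((0 : Stt nx), Pi.single p 1)) w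

/-- A_k = ∂f_k/∂x(x̄_k, ū_k) -/
def Amat (P : Setup T nx N m) (ub : Seq T N m) (k : ℕ) : Matrix (Fin nx) (Fin nx) ℝ :=
  fun i j => fderiv ℝ (fun x => P.f k x (extSeq ub k) i) (traj P ub k) (Pi.single j 1)

/-- B_k = ∂f_k/∂u(x̄_k, ū_k) -/
def Bmat (P : Setup T nx N m) (ub : Seq T N m) (k : ℕ) : Matrix (Fin nx) (UIdx N m) ℝ :=
  fun i p => fderiv ℝ (fun v => P.f k (traj P ub k) v i) (extSeq ub k) (Pi.single p 1)

/-- G_k^l : Hessian of the l-th component of f_k w.r.t. the joint variable (x,u) -/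
def Gmat (P : Setup T nx N m) (ub : Seq T N m) (k : ℕ) (l : Fin nx) :
    Matrix (ZIdx nx N m) (ZIdx nx N m) ℝ :=
  fun a b =>
    fderiv ℝ (fun z => fderiv ℝ (fun w => fpair P k w l) z (zbasis a)) (zbar P ub k) (zbasis b)

/-- M_{n,k}^{1x} = ∂c_{n,k}/∂x (row vector) -/
def M1x (P : Setup T nx N m) (ub : Seq T N m) (n : Fin N) (k : ℕ) : Fin nx → ℝ :=
  fun j => fderiv ℝ (cpair P n k) (zbar P ub k) (zbasis (Sum.inl j))

/-- M_{n,k}^{1u} = ∂c_{n,k}/∂u (row vector) -/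
def M1u (P : Setup T nx N m) (ub : Seq T N m) (n : Fin N) (k : ℕ) : UIdx N m → ℝ :=
  fun p => fderiv ℝ (cpair P n k) (zbar P ub k) (zbasis (Sum.inr p))

/-- Hessian blocks of c_{n,k} w.r.t. the joint variable (x,u) -/
def M2 (P : Setup T nx N m) (ub : Seq T N m) (n : Fin N) (k : ℕ) :
    Matrix (ZIdx nx N m) (ZIdx nx N m) ℝ :=
  fun w w' =>
    fderiv ℝ (fun z => fderiv ℝ (cpair P n k) z (zbasis w)) (zbar P ub k) (zbasis w')

/-- the matrix M_{n,k} of the paper -/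
def Mmat (P : Setup T nx N m) (ub : Seq T N m) (n : Fin N) (k : ℕ) :
    Matrix (Ix nx N m) (Ix nx N m) ℝ :=
  fun a b =>
    match a, b with
    | Sum.inl _, Sum.inl _ => 2 * P.c n k (traj P ub k) (extSeq ub k)
    | Sum.inl _, Sum.inr w => Sum.elim (M1x P ub n k) (M1u P ub n k) w
    | Sum.inr w, Sum.inl _ => Sum.elim (M1x P ub n k) (M1u P ub n k) w
    | Sum.inr w, Sum.inr w' => M2 P ub n k w w'

/-- vector [1; δx; δu] -/
def vec1 (δx : Stt nx) (δu : Inp N m) : Ix nx N m → ℝ :=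
  Sum.elim (fun _ => (1 : ℝ)) (Sum.elim δx δu)

/-- vector [1; δx] -/
def vecj (δx : Stt nx) : Jx nx → ℝ := Sum.elim (fun _ => (1 : ℝ)) δx

/-- the matrix F formed by stacking the rows Γ_n^{uₙ u} -/
def Fof (Γ : Fin N → Matrix (Ix nx N m) (Ix nx N m) ℝ) : Matrix (UIdx N m) (UIdx N m) ℝ :=
  fun p q => Γ p.1 (Sum.inr (Sum.inr p)) (Sum.inr (Sum.inr q))

/-- the matrix P formed by stacking the blocks Γ_n^{uₙ x} -/
def Pof (Γ : Fin N → Matrix (Ix nx N m) (Ix nx N m) ℝ) : Matrix (UIdx N m) (Fin nx) ℝ :=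
  fun p j => Γ p.1 (Sum.inr (Sum.inr p)) (Sum.inr (Sum.inl j))

/-- the vector H formed by stacking the blocks Γ_n^{uₙ 1} -/
def Hof (Γ : Fin N → Matrix (Ix nx N m) (Ix nx N m) ℝ) : Inp N m :=
  fun p => Γ p.1 (Sum.inr (Sum.inr p)) (Sum.inl ())

/-- s = −F⁻¹ H -/
def sof (Γ : Fin N → Matrix (Ix nx N m) (Ix nx N m) ℝ) : Inp N m :=
  -((Fof Γ)⁻¹ *ᵥ Hof Γ)

/-- K = −F⁻¹ P -/
def Kof (Γ : Fin N → Matrix (Ix nx N m) (Ix nx N m) ℝ) : Matrix (UIdx N m) (Fin nx) ℝ :=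
  -((Fof Γ)⁻¹ * Pof Γ)

/-- the matrix [[1,0,0],[0,A,B]] -/
def Cmat (A : Matrix (Fin nx) (Fin nx) ℝ) (B : Matrix (Fin nx) (UIdx N m) ℝ) :
    Matrix (Jx nx) (Ix nx N m) ℝ :=
  fun a b =>
    match a, b with
    | Sum.inl _, Sum.inl _ => 1
    | Sum.inl _, Sum.inr _ => 0
    | Sum.inr _, Sum.inl _ => 0
    | Sum.inr i, Sum.inr (Sum.inl j) => A i j
    | Sum.inr i, Sum.inr (Sum.inr p) => B i p

/-- extend an (x,u)-square matrix by zeros to the 1+(x,u) index set -/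
def Dext (D : Matrix (ZIdx nx N m) (ZIdx nx N m) ℝ) : Matrix (Ix nx N m) (Ix nx N m) ℝ :=
  fun a b =>
    match a, b with
    | Sum.inr w, Sum.inr w' => D w w'
    | _, _ => 0

/-- the matrix [[1,0],[0,I],[s,K]] -/
def Emat (s : Inp N m) (K : Matrix (UIdx N m) (Fin nx) ℝ) : Matrix (Ix nx N m) (Jx nx) ℝ :=
  fun a b =>
    match a, b with
    | Sum.inl _, Sum.inl _ => 1
    | Sum.inl _, Sum.inr _ => 0
    | Sum.inr (Sum.inl _), Sum.inl _ => 0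
    | Sum.inr (Sum.inl i), Sum.inr j => if i = j then 1 else 0
    | Sum.inr (Sum.inr p), Sum.inl _ => s p
    | Sum.inr (Sum.inr p), Sum.inr j => K p j

/-- Γ_n = M_n + Cᵀ S_n C + Dext(D_n), the common backpropagation step of both recursions -/
def gammaFam (P : Setup T nx N m) (ub : Seq T N m)
    (S : Fin N → Matrix (Jx nx) (Jx nx) ℝ) (k : ℕ)
    (D : Fin N → Matrix (ZIdx nx N m) (ZIdx nx N m) ℝ) :
    Fin N → Matrix (Ix nx N m) (Ix nx N m) ℝ :=
  fun n =>
    Mmat P ub n k + (Cmat (Amat P ub k) (Bmat P ub k))ᵀ * S n * Cmat (Amat P ub k) (Bmat P ub k)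
      + Dext (D n)

/-- S_n = Eᵀ Γ_n E : substitution of the equilibrium affine policy -/
def subPolicy (Γ : Fin N → Matrix (Ix nx N m) (Ix nx N m) ℝ) :
    Fin N → Matrix (Jx nx) (Jx nx) ℝ :=
  fun n => (Emat (sof Γ) (Kof Γ))ᵀ * Γ n * Emat (sof Γ) (Kof Γ)

/-- Ω recursion, indexed by number of steps from the end: `omegaAux j = Ω_{·,T+1-j}` -/
def omegaAux (P : Setup T nx N m) (ub : Seq T N m) (n : Fin N) : ℕ → (Fin nx → ℝ)
  | 0 => 0
  | j + 1 => M1x P ub n (T - j) + omegaAux P ub n j ᵥ* Amat P ub (T - j)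

/-- Ω_{n,k} of the Newton backward recursion -/
def Omega (P : Setup T nx N m) (ub : Seq T N m) (n : Fin N) (k : ℕ) : Fin nx → ℝ :=
  omegaAux P ub n (T + 1 - k)

/-- Newton backward recursion for S, indexed by steps from the end: `newtSAux j = S_{·,T+1-j}` -/
def newtSAux (P : Setup T nx N m) (ub : Seq T N m) : ℕ → Fin N → Matrix (Jx nx) (Jx nx) ℝ
  | 0 => fun _ => 0
  | j + 1 =>
    subPolicy (gammaFam P ub (newtSAux P ub j) (T - j)
      (fun n => ∑ l, omegaAux P ub n j l • Gmat P ub (T - j) l))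

/-- D_{n,k} of the Newton backward recursion -/
def newtD (P : Setup T nx N m) (ub : Seq T N m) (k : ℕ) :
    Fin N → Matrix (ZIdx nx N m) (ZIdx nx N m) ℝ :=
  fun n => ∑ l, Omega P ub n (k + 1) l • Gmat P ub k l

/-- Γ_{n,k} of the Newton backward recursion -/
def newtGamma (P : Setup T nx N m) (ub : Seq T N m) (k : ℕ) :
    Fin N → Matrix (Ix nx N m) (Ix nx N m) ℝ :=
  gammaFam P ub (newtSAux P ub (T - k)) k (newtD P ub k)

/-- S_{n,k} of the Newton backward recursion -/
def newtSmat (P : Setup T nx N m) (ub : Seq T N m) (k : ℕ) :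
    Fin N → Matrix (Jx nx) (Jx nx) ℝ :=
  newtSAux P ub (T + 1 - k)

def newtF (P : Setup T nx N m) (ub : Seq T N m) (k : ℕ) : Matrix (UIdx N m) (UIdx N m) ℝ :=
  Fof (newtGamma P ub k)
def newtP (P : Setup T nx N m) (ub : Seq T N m) (k : ℕ) : Matrix (UIdx N m) (Fin nx) ℝ :=
  Pof (newtGamma P ub k)
def newtH (P : Setup T nx N m) (ub : Seq T N m) (k : ℕ) : Inp N m :=
  Hof (newtGamma P ub k)
def newts (P : Setup T nx N m) (ub : Seq T N m) (k : ℕ) : Inp N m :=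
  sof (newtGamma P ub k)
def newtK (P : Setup T nx N m) (ub : Seq T N m) (k : ℕ) : Matrix (UIdx N m) (Fin nx) ℝ :=
  Kof (newtGamma P ub k)

/-- DDP backward recursion for S̃, indexed by steps from the end: `ddpSAux j = S̃_{·,T+1-j}` -/
def ddpSAux (P : Setup T nx N m) (ub : Seq T N m) : ℕ → Fin N → Matrix (Jx nx) (Jx nx) ℝ
  | 0 => fun _ => 0
  | j + 1 =>
    subPolicy (gammaFam P ub (ddpSAux P ub j) (T - j)
      (fun n => ∑ l, (ddpSAux P ub j n) (Sum.inl ()) (Sum.inr l) • Gmat P ub (T - j) l))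

/-- D̃_{n,k} of the DDP backward recursion -/
def ddpD (P : Setup T nx N m) (ub : Seq T N m) (k : ℕ) :
    Fin N → Matrix (ZIdx nx N m) (ZIdx nx N m) ℝ :=
  fun n => ∑ l, (ddpSAux P ub (T - k) n) (Sum.inl ()) (Sum.inr l) • Gmat P ub k l

/-- Γ̃_{n,k} of the DDP backward recursion -/
def ddpGamma (P : Setup T nx N m) (ub : Seq T N m) (k : ℕ) :
    Fin N → Matrix (Ix nx N m) (Ix nx N m) ℝ :=
  gammaFam P ub (ddpSAux P ub (T - k)) k (ddpD P ub k)

/-- S̃_{n,k} of the DDP backward recursion -/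
def ddpSmat (P : Setup T nx N m) (ub : Seq T N m) (k : ℕ) :
    Fin N → Matrix (Jx nx) (Jx nx) ℝ :=
  ddpSAux P ub (T + 1 - k)

def ddpF (P : Setup T nx N m) (ub : Seq T N m) (k : ℕ) : Matrix (UIdx N m) (UIdx N m) ℝ :=
  Fof (ddpGamma P ub k)
def ddpPmat (P : Setup T nx N m) (ub : Seq T N m) (k : ℕ) : Matrix (UIdx N m) (Fin nx) ℝ :=
  Pof (ddpGamma P ub k)
def ddpH (P : Setup T nx N m) (ub : Seq T N m) (k : ℕ) : Inp N m :=
  Hof (ddpGamma P ub k)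
def ddps (P : Setup T nx N m) (ub : Seq T N m) (k : ℕ) : Inp N m :=
  sof (ddpGamma P ub k)
def ddpK (P : Setup T nx N m) (ub : Seq T N m) (k : ℕ) : Matrix (UIdx N m) (Fin nx) ℝ :=
  Kof (ddpGamma P ub k)

/-- Newton forward pass: states δx_k -/
def newtDx (P : Setup T nx N m) (ub : Seq T N m) : ℕ → Stt nx
  | 0 => 0
  | k + 1 =>
    Amat P ub k *ᵥ newtDx P ub k
      + Bmat P ub k *ᵥ (newtK P ub k *ᵥ newtDx P ub k + newts P ub k)

/-- Newton forward pass: inputs δu_k = K_k δx_k + s_k -/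
def newtDu (P : Setup T nx N m) (ub : Seq T N m) (k : ℕ) : Inp N m :=
  newtK P ub k *ᵥ newtDx P ub k + newts P ub k

/-- DDP forward pass: states x_k^D -/
def ddpX (P : Setup T nx N m) (ub : Seq T N m) : ℕ → Stt nx
  | 0 => P.x0
  | k + 1 =>
    P.f k (ddpX P ub k)
      (extSeq ub k + (ddpK P ub k *ᵥ (ddpX P ub k - traj P ub k) + ddps P ub k))

/-- DDP forward pass: δx_k^D = x_k^D − x̄_k -/
def ddpDx (P : Setup T nx N m) (ub : Seq T N m) (k : ℕ) : Stt nx :=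
  ddpX P ub k - traj P ub k

/-- DDP forward pass: δu_k^D = K̃_k δx_k^D + s̃_k -/
def ddpDu (P : Setup T nx N m) (ub : Seq T N m) (k : ℕ) : Inp N m :=
  ddpK P ub k *ᵥ ddpDx P ub k + ddps P ub k

/-- one full DDP iteration on input sequences -/
def ddpStep (P : Setup T nx N m) (ub : Seq T N m) : Seq T N m :=
  fun t => ub t + ddpDu P ub (t : ℕ)

/-- first-order sensitivity of the state x_k w.r.t. the input sequence, along δu -/
def dx1 (P : Setup T nx N m) (ub δu : Seq T N m) (k : ℕ) : Stt nx :=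
  fun i => fderiv ℝ (fun u => traj P u k i) ub δu

/-- second-order sensitivity of the state x_k w.r.t. the input sequence, along (δu,δu) -/
def dx2 (P : Setup T nx N m) (ub δu : Seq T N m) (k : ℕ) : Stt nx :=
  fun l => fderiv ℝ (fun u => fderiv ℝ (fun u' => traj P u' k l) u δu) ub δu

/-- recursively defined first-order state perturbation δx_k -/
def dxRec (P : Setup T nx N m) (ub δu : Seq T N m) : ℕ → Stt nx
  | 0 => 0
  | k + 1 => Amat P ub k *ᵥ dxRec P ub δu k + Bmat P ub k *ᵥ extSeq δu k

/-- the quadratic vector R_k(δx, δu), with l-th entry [δx;δu]ᵀ G_k^l [δx;δu] -/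
def Rquad (P : Setup T nx N m) (ub : Seq T N m) (k : ℕ) (δx : Stt nx) (δu : Inp N m) :
    Stt nx :=
  fun l => Sum.elim δx δu ⬝ᵥ (Gmat P ub k l *ᵥ Sum.elim δx δu)

/-- recursively defined second-order state perturbation Δx_k -/
def DxRec (P : Setup T nx N m) (ub δu : Seq T N m) : ℕ → Stt nx
  | 0 => 0
  | k + 1 =>
    Amat P ub k *ᵥ DxRec P ub δu k + Rquad P ub k (dxRec P ub δu k) (extSeq δu k)

/-- partial Jacobian ∂x_k/∂u_i at ū -/
def Xjac (P : Setup T nx N m) (ub : Seq T N m) (k : ℕ) (i : Fin (T+1)) :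
    Matrix (Fin nx) (UIdx N m) ℝ :=
  fun l a => fderiv ℝ (fun u => traj P u k l) ub (Pi.single i (Pi.single a 1))

/-- mixed second partial derivatives ∂²x_k^l/∂u_i∂u_j at ū -/
def Xhess (P : Setup T nx N m) (ub : Seq T N m) (k : ℕ) (l : Fin nx) (i j : Fin (T+1)) :
    Matrix (UIdx N m) (UIdx N m) ℝ :=
  fun a b =>
    fderiv ℝ (fun u => fderiv ℝ (fun u' => traj P u' k l) u (Pi.single i (Pi.single a 1))) ub
      (Pi.single j (Pi.single b 1))

/-- restarted trajectory: state at time k+j when restarting from ξ at time k with nominal inputs -/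
def trajFrom (P : Setup T nx N m) (ub : Seq T N m) (k : ℕ) (ξ : Stt nx) : ℕ → Stt nx
  | 0 => ξ
  | j + 1 => P.f (k + j) (trajFrom P ub k ξ j) (extSeq ub (k + j))

/-- player n's cost-to-go from time k as a function of the time-k state -/
def cost2go (P : Setup T nx N m) (ub : Seq T N m) (n : Fin N) (k : ℕ) (ξ : Stt nx) : ℝ :=
  ∑ j ∈ Finset.range (T + 1 - k), P.c n (k + j) (trajFrom P ub k ξ j) (extSeq ub (k + j))

/-- second-order Taylor polynomial of g at z0, evaluated at z -/
def taylor2 {E : Type*} [NormedAddCommGroup E] [NormedSpace ℝ E] (g : E → ℝ) (z0 z : E) : ℝ :=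
  g z0 + fderiv ℝ g z0 (z - z0)
    + (1 / 2) * fderiv ℝ (fun w => fderiv ℝ g w (z - z0)) z0 (z - z0)

/-- DDP approximate value functions, indexed by steps from the end: `ddpVAux j = Ṽ_{·,T+1-j}` -/
def ddpVAux (P : Setup T nx N m) (ub : Seq T N m) : ℕ → Fin N → Stt nx → ℝ
  | 0 => fun _ _ => 0
  | j + 1 => fun n x =>
    taylor2 (fun z : Stt nx × Inp N m => cpair P n (T - j) z + ddpVAux P ub j n (fpair P (T - j) z))
      (zbar P ub (T - j))
      (x, extSeq ub (T - j)
        + (ddpK P ub (T - j) *ᵥ (x - traj P ub (T - j)) + ddps P ub (T - j)))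

/-- DDP approximate state-action value function Q̃_{n,k} -/
def ddpQ (P : Setup T nx N m) (ub : Seq T N m) (k : ℕ) (n : Fin N)
    (x : Stt nx) (u : Inp N m) : ℝ :=
  taylor2 (fun z : Stt nx × Inp N m => cpair P n k z + ddpVAux P ub (T - k) n (fpair P k z))
    (zbar P ub k) (x, u)

/-- DDP approximate value function Ṽ_{n,k} -/
def ddpV (P : Setup T nx N m) (ub : Seq T N m) (k : ℕ) (n : Fin N) (x : Stt nx) : ℝ :=
  ddpVAux P ub (T + 1 - k) n x

/-- Newton-game value functions, indexed by steps from the end: `newtVAux j = V_{·,T+1-j}` -/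
def newtVAux (P : Setup T nx N m) (ub : Seq T N m) : ℕ → Fin N → Stt nx → Stt nx → ℝ
  | 0 => fun _ _ _ => 0
  | j + 1 => fun n δx Δx =>
    (1 / 2) * (vec1 δx (newtK P ub (T - j) *ᵥ δx + newts P ub (T - j)) ⬝ᵥ
        (Mmat P ub n (T - j) *ᵥ vec1 δx (newtK P ub (T - j) *ᵥ δx + newts P ub (T - j)))
      + M1x P ub n (T - j) ⬝ᵥ Δx)
    + newtVAux P ub j n
        (Amat P ub (T - j) *ᵥ δx
          + Bmat P ub (T - j) *ᵥ (newtK P ub (T - j) *ᵥ δx + newts P ub (T - j)))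
        (Amat P ub (T - j) *ᵥ Δx
          + Rquad P ub (T - j) δx (newtK P ub (T - j) *ᵥ δx + newts P ub (T - j)))

/-- Newton-game state-action value function Q_{n,k} -/
def newtQ (P : Setup T nx N m) (ub : Seq T N m) (k : ℕ) (n : Fin N)
    (δx Δx : Stt nx) (δu : Inp N m) : ℝ :=
  (1 / 2) * (vec1 δx δu ⬝ᵥ (Mmat P ub n k *ᵥ vec1 δx δu) + M1x P ub n k ⬝ᵥ Δx)
    + newtVAux P ub (T - k) n (Amat P ub k *ᵥ δx + Bmat P ub k *ᵥ δu)
        (Amat P ub k *ᵥ Δx + Rquad P ub k δx δu)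

/-- Newton-game value function V_{n,k} -/
def newtV (P : Setup T nx N m) (ub : Seq T N m) (k : ℕ) (n : Fin N) (δx Δx : Stt nx) : ℝ :=
  newtVAux P ub (T + 1 - k) n δx Δx

/-- replace player n's inputs in u* by w, keeping the others fixed -/
def combineInput (ustar : Seq T N m) (n : Fin N) (w : Fin (T+1) → Fin (m n) → ℝ) :
    Seq T N m :=
  fun k p => if h : p.1 = n then w k (Fin.cast (congrArg m h) p.2) else ustar k p


/-! ### Auxiliary machinery for statement2 -/

section Aux2

variable {T nx N : ℕ} {m : Fin N → ℕ}

/-- coordinates of a joint (state,input) vector -/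
def coordZ (z : Stt nx × Inp N m) : ZIdx nx N m → ℝ := Sum.elim z.1 z.2

lemma pi_expand {ι : Type*} [Fintype ι] [DecidableEq ι] (x : ι → ℝ) :
    ∑ i, x i • (Pi.single i (1:ℝ) : ι → ℝ) = x := by
  funext j
  rw [Finset.sum_apply]
  simp [Pi.single_apply]

lemma basis_expand (z : Stt nx × Inp N m) : ∑ w, coordZ z w • zbasis w = z := by
  apply Prod.ext
  · rw [Prod.fst_sum]
    simp only [Prod.smul_fst, Fintype.sum_sum_type, coordZ, zbasis, Sum.elim_inl, Sum.elim_inr]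
    simp [pi_expand z.1]
  · rw [Prod.snd_sum]
    simp only [Prod.smul_snd, Fintype.sum_sum_type, coordZ, zbasis, Sum.elim_inl, Sum.elim_inr]
    simp [pi_expand z.2]

lemma clm_expand {F : Type*} [NormedAddCommGroup F] [NormedSpace ℝ F]
    (L : (Stt nx × Inp N m) →L[ℝ] F) (v : Stt nx × Inp N m) :
    L v = ∑ w, coordZ v w • L (zbasis w) := by
  conv_lhs => rw [← basis_expand v]
  rw [map_sum]
  simp

/-- bilinear form of a matrix, as a continuous linear map -/
def dpL {ι : Type*} [Fintype ι] (S : Matrix ι ι ℝ) : (ι → ℝ) →L[ℝ] (ι → ℝ) →L[ℝ] ℝ :=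
  LinearMap.toContinuousLinearMap <|
  { toFun := fun v => LinearMap.toContinuousLinearMap
      { toFun := fun w => v ⬝ᵥ S.mulVec w
        map_add' := fun a b => by simp [Matrix.mulVec_add, dotProduct_add]
        map_smul' := fun c a => by simp [Matrix.mulVec_smul, dotProduct_smul] }
    map_add' := fun a b => by
      ext w
      simp [add_dotProduct]
    map_smul' := fun c a => by
      ext w
      simp [smul_dotProduct] }

@[simp] lemma dpL_apply {ι : Type*} [Fintype ι] (S : Matrix ι ι ℝ) (v w : ι → ℝ) :
    dpL S v w = v ⬝ᵥ S.mulVec w := rfl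

/-- linear inclusion of the state space into the extended state space -/
def linJ : Stt nx →L[ℝ] (Jx nx → ℝ) :=
  LinearMap.toContinuousLinearMap
  { toFun := fun x => Sum.elim (fun _ : Unit => (0:ℝ)) x
    map_add' := fun a b => by funext j; cases j <;> simp
    map_smul' := fun c a => by funext j; cases j <;> simp }

@[simp] lemma linJ_apply (x : Stt nx) :
    (linJ x : Jx nx → ℝ) = Sum.elim (fun _ => (0:ℝ)) x := rfl

/-- the extended-state vector (1,0) -/
def ecJ : Jx nx → ℝ := Sum.elim (fun _ => (1:ℝ)) 0

lemma vecj_decomp (y : Stt nx) : (vecj y : Jx nx → ℝ) = ecJ + linJ y := by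
  funext j; cases j <;> simp [vecj, ecJ]

/-- quadratic value function given by matrix S centered at a -/
def Vq (S : Matrix (Jx nx) (Jx nx) ℝ) (a x : Stt nx) : ℝ :=
  (1/2) * (vecj (x - a) ⬝ᵥ S.mulVec (vecj (x - a)))

lemma Vq_eq_dpL (S : Matrix (Jx nx) (Jx nx) ℝ) (a x : Stt nx) :
    Vq S a x = (1/2) * dpL S (vecj (x - a)) (vecj (x - a)) := rfl

end Aux2
section Calc
variable {T nx N : ℕ} {m : Fin N → ℕ}

lemma diff_fderiv_apply {φ : Stt nx × Inp N m → ℝ} (hφ : ContDiff ℝ 2 φ)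
    (v : Stt nx × Inp N m) :
    Differentiable ℝ (fun z => fderiv ℝ φ z v) := by
  have h1 : ContDiff ℝ 1 (fderiv ℝ φ) := hφ.fderiv_right (by norm_num)
  exact fun x => ((h1.differentiable one_ne_zero) x).clm_apply (differentiableAt_const v)

lemma snd_eval {φ : Stt nx × Inp N m → ℝ} (hφ : ContDiff ℝ 2 φ)
    (x v w : Stt nx × Inp N m) :
    fderiv ℝ (fun z => fderiv ℝ φ z v) x w = fderiv ℝ (fderiv ℝ φ) x w v := by
  have h1 : ContDiff ℝ 1 (fderiv ℝ φ) := hφ.fderiv_right (by norm_num)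
  have := fderiv_clm_apply (c := fderiv ℝ φ) (u := fun _ => v)
    ((h1.differentiable one_ne_zero) x) (differentiableAt_const v)
  rw [show (fun z => fderiv ℝ φ z v) = fun z => (fderiv ℝ φ z) ((fun _ => v) z) from rfl, this]
  simp

lemma snd_symm {φ : Stt nx × Inp N m → ℝ} (hφ : ContDiff ℝ 2 φ)
    (x v w : Stt nx × Inp N m) :
    fderiv ℝ (fun z => fderiv ℝ φ z v) x w = fderiv ℝ (fun z => fderiv ℝ φ z w) x v := by
  rw [snd_eval hφ, snd_eval hφ]
  exact hφ.contDiffAt.isSymmSndFDerivAt (by simp) w v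

lemma snd_expand {φ : Stt nx × Inp N m → ℝ} (hφ : ContDiff ℝ 2 φ)
    (x v v' : Stt nx × Inp N m) :
    fderiv ℝ (fun z => fderiv ℝ φ z v) x v'
      = ∑ a, ∑ b, coordZ v a *
          (coordZ v' b * fderiv ℝ (fun z => fderiv ℝ φ z (zbasis a)) x (zbasis b)) := by
  have hfun : (fun z => fderiv ℝ φ z v)
      = fun z => ∑ a, coordZ v a • (fderiv ℝ φ z (zbasis a)) :=
    funext fun z => clm_expand (fderiv ℝ φ z) v
  rw [hfun]
  have hdiff : ∀ a : ZIdx nx N m, a ∈ (Finset.univ : Finset (ZIdx nx N m)) →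
      DifferentiableAt ℝ (fun z => coordZ v a • (fderiv ℝ φ z (zbasis a))) x :=
    fun a _ => ((diff_fderiv_apply hφ (zbasis a)) x).const_smul (coordZ v a)
  rw [fderiv_fun_sum hdiff]
  rw [ContinuousLinearMap.sum_apply]
  refine Finset.sum_congr rfl fun a _ => ?_
  rw [fderiv_fun_const_smul ((diff_fderiv_apply hφ (zbasis a)) x) (coordZ v a)]
  rw [ContinuousLinearMap.smul_apply]
  rw [clm_expand (fderiv ℝ (fun z => fderiv ℝ φ z (zbasis a)) x) v']
  rw [Finset.smul_sum]
  refine Finset.sum_congr rfl fun b _ => ?_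
  simp [mul_assoc]

lemma fderiv_pi_apply {F : Stt nx × Inp N m → Stt nx} {z : Stt nx × Inp N m}
    (hF : DifferentiableAt ℝ F z) (v : Stt nx × Inp N m) (l : Fin nx) :
    fderiv ℝ (fun z' => F z' l) z v = fderiv ℝ F z v l := by
  have h := ((ContinuousLinearMap.proj (R := ℝ) (φ := fun _ : Fin nx => ℝ) l).hasFDerivAt.comp
    z hF.hasFDerivAt).fderiv
  have h2 : (fun z' => F z' l)
      = (ContinuousLinearMap.proj (R := ℝ) (φ := fun _ : Fin nx => ℝ) l) ∘ F := rfl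
  rw [h2, h]
  rfl

end Calc
section Bridge
variable {T nx N : ℕ} {m : Fin N → ℕ} (P : Setup T nx N m) (ub : Seq T N m) (k : ℕ)

lemma sum_to_quad {ι : Type*} [Fintype ι] (K : Matrix ι ι ℝ) (x y : ι → ℝ) :
    ∑ a, ∑ b, x a * (y b * K a b) = x ⬝ᵥ K.mulVec y := by
  simp only [dotProduct, Matrix.mulVec, Finset.mul_sum]
  refine Finset.sum_congr rfl fun a _ => Finset.sum_congr rfl fun b _ => by ring

lemma contDiff_fl (hf2 : ContDiff ℝ 2 (fpair P k)) (l : Fin nx) :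
    ContDiff ℝ 2 (fun z : Stt nx × Inp N m => fpair P k z l) :=
  (ContinuousLinearMap.proj (R := ℝ) (φ := fun _ : Fin nx => ℝ) l).contDiff.comp hf2

lemma Amat_eq (hf2 : ContDiff ℝ 2 (fpair P k)) (i : Fin nx) (j : Fin nx) :
    Amat P ub k i j
      = fderiv ℝ (fun z => fpair P k z i) (zbar P ub k) (zbasis (Sum.inl j)) := by
  have hι : HasFDerivAt (fun x : Stt nx => (x, extSeq ub k))
      ((ContinuousLinearMap.id ℝ (Stt nx)).prod 0) (traj P ub k) :=
    (hasFDerivAt_id _).prodMk (hasFDerivAt_const _ _)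
  have hfl : DifferentiableAt ℝ (fun z => fpair P k z i) (zbar P ub k) :=
    ((contDiff_fl P k hf2 i).differentiable two_ne_zero) _
  have hcomp := (hfl.hasFDerivAt.comp (traj P ub k) hι).fderiv
  show fderiv ℝ (fun x => P.f k x (extSeq ub k) i) (traj P ub k) (Pi.single j 1) = _
  rw [show (fun x => P.f k x (extSeq ub k) i)
      = (fun z => fpair P k z i) ∘ (fun x : Stt nx => (x, extSeq ub k)) from rfl, hcomp]
  rfl

lemma Bmat_eq (hf2 : ContDiff ℝ 2 (fpair P k)) (i : Fin nx) (p : UIdx N m) :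
    Bmat P ub k i p
      = fderiv ℝ (fun z => fpair P k z i) (zbar P ub k) (zbasis (Sum.inr p)) := by
  have hι : HasFDerivAt (fun v : Inp N m => (traj P ub k, v))
      ((0 : Inp N m →L[ℝ] Stt nx).prod (ContinuousLinearMap.id ℝ (Inp N m))) (extSeq ub k) :=
    (hasFDerivAt_const _ _).prodMk (hasFDerivAt_id _)
  have hfl : DifferentiableAt ℝ (fun z => fpair P k z i) (zbar P ub k) :=
    ((contDiff_fl P k hf2 i).differentiable two_ne_zero) _
  have hcomp := (hfl.hasFDerivAt.comp (extSeq ub k) hι).fderiv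
  show fderiv ℝ (fun v => P.f k (traj P ub k) v i) (extSeq ub k) (Pi.single p 1) = _
  rw [show (fun v => P.f k (traj P ub k) v i)
      = (fun z => fpair P k z i) ∘ (fun v : Inp N m => (traj P ub k, v)) from rfl, hcomp]
  rfl

lemma fderiv_fpair_eq (hf2 : ContDiff ℝ 2 (fpair P k)) (v : Stt nx × Inp N m) :
    fderiv ℝ (fpair P k) (zbar P ub k) v
      = Amat P ub k *ᵥ v.1 + Bmat P ub k *ᵥ v.2 := by
  funext l
  rw [← fderiv_pi_apply ((hf2.differentiable two_ne_zero) _) v l]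
  rw [clm_expand (fderiv ℝ (fun z => fpair P k z l) (zbar P ub k)) v]
  rw [Fintype.sum_sum_type]
  have hA : ∀ j, fderiv ℝ (fun z => fpair P k z l) (zbar P ub k) (zbasis (Sum.inl j))
      = Amat P ub k l j := fun j => (Amat_eq P ub k hf2 l j).symm
  have hB : ∀ p, fderiv ℝ (fun z => fpair P k z l) (zbar P ub k) (zbasis (Sum.inr p))
      = Bmat P ub k l p := fun p => (Bmat_eq P ub k hf2 l p).symm
  simp only [hA, hB, coordZ, Sum.elim_inl, Sum.elim_inr, smul_eq_mul]
  simp [Matrix.mulVec, dotProduct, mul_comm]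

lemma fderiv2_fpair_eq (hf2 : ContDiff ℝ 2 (fpair P k)) (v v' : Stt nx × Inp N m) :
    fderiv ℝ (fun w => fderiv ℝ (fpair P k) w v) (zbar P ub k) v'
      = fun l => coordZ v ⬝ᵥ (Gmat P ub k l).mulVec (coordZ v') := by
  have hdF : Differentiable ℝ (fderiv ℝ (fpair P k)) :=
    (hf2.fderiv_right (m := 1) (by norm_num)).differentiable one_ne_zero
  have hΦ : DifferentiableAt ℝ (fun w => fderiv ℝ (fpair P k) w v) (zbar P ub k) :=
    (hdF _).clm_apply (differentiableAt_const v)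
  funext l
  rw [← fderiv_pi_apply hΦ v' l]
  have hwv : (fun w => fderiv ℝ (fpair P k) w v l)
      = fun w => fderiv ℝ (fun z => fpair P k z l) w v :=
    funext fun w => (fderiv_pi_apply ((hf2.differentiable two_ne_zero) w) v l).symm
  rw [hwv, snd_expand (contDiff_fl P k hf2 l) (zbar P ub k) v v']
  exact sum_to_quad _ _ _

lemma fderiv_cpair_eq (n : Fin N) (v : Stt nx × Inp N m) :
    fderiv ℝ (cpair P n k) (zbar P ub k) v
      = Sum.elim (M1x P ub n k) (M1u P ub n k) ⬝ᵥ coordZ v := by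
  rw [clm_expand (fderiv ℝ (cpair P n k) (zbar P ub k)) v]
  rw [dotProduct]
  refine Finset.sum_congr rfl fun w _ => ?_
  cases w <;> simp [M1x, M1u, mul_comm]

lemma fderiv2_cpair_eq (n : Fin N) (hc2 : ContDiff ℝ 2 (cpair P n k))
    (v v' : Stt nx × Inp N m) :
    fderiv ℝ (fun z => fderiv ℝ (cpair P n k) z v) (zbar P ub k) v'
      = coordZ v ⬝ᵥ (M2 P ub n k).mulVec (coordZ v') := by
  rw [snd_expand hc2 (zbar P ub k) v v']
  exact sum_to_quad _ _ _

end Bridge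
section StepA
variable {T nx N : ℕ} {m : Fin N → ℕ} (P : Setup T nx N m) (k : ℕ) (n : Fin N)

@[simp] lemma vecj_zero : (vecj (0 : Stt nx) : Jx nx → ℝ) = ecJ := by
  funext j; cases j <;> simp [vecj, ecJ]

lemma hasFDerivAt_q (hf2 : ContDiff ℝ 2 (fpair P k)) (a : Stt nx) (z : Stt nx × Inp N m) :
    HasFDerivAt (fun w => (vecj (fpair P k w - a) : Jx nx → ℝ))
      (linJ.comp (fderiv ℝ (fpair P k) z)) z := by
  have hF' : HasFDerivAt (fpair P k) (fderiv ℝ (fpair P k) z) z :=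
    ((hf2.differentiable two_ne_zero) z).hasFDerivAt
  have h1 : (fun w => (vecj (fpair P k w - a) : Jx nx → ℝ))
      = fun w => (ecJ - linJ a) + linJ (fpair P k w) := by
    funext w
    rw [vecj_decomp, map_sub]
    abel
  rw [h1]
  exact (linJ.hasFDerivAt.comp z hF').const_add (ecJ - linJ a)

lemma fderiv_g (hf2 : ContDiff ℝ 2 (fpair P k)) (hc2 : ContDiff ℝ 2 (cpair P n k))
    (S : Matrix (Jx nx) (Jx nx) ℝ) (a : Stt nx) (z v : Stt nx × Inp N m) :
    fderiv ℝ (fun w => cpair P n k w + Vq S a (fpair P k w)) z v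
      = fderiv ℝ (cpair P n k) z v
        + (1/2) * (dpL S (vecj (fpair P k z - a)) (linJ (fderiv ℝ (fpair P k) z v))
          + dpL S (linJ (fderiv ℝ (fpair P k) z v)) (vecj (fpair P k z - a))) := by
  have hq := hasFDerivAt_q P k hf2 a z
  have hc' : HasFDerivAt (fun w => (dpL S) (vecj (fpair P k w - a)))
      ((dpL S).comp (linJ.comp (fderiv ℝ (fpair P k) z))) z :=
    (dpL S).hasFDerivAt.comp z hq
  have hQ := hc'.clm_apply hq
  have hVq : HasFDerivAt (fun w => Vq S a (fpair P k w))
      ((1/2 : ℝ) • ((dpL S (vecj (fpair P k z - a))).comp (linJ.comp (fderiv ℝ (fpair P k) z))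
        + ((dpL S).comp (linJ.comp (fderiv ℝ (fpair P k) z))).flip
            (vecj (fpair P k z - a)))) z := by
    have := hQ.const_mul (1/2 : ℝ)
    exact this
  have hcd : HasFDerivAt (cpair P n k) (fderiv ℝ (cpair P n k) z) z :=
    ((hc2.differentiable two_ne_zero) z).hasFDerivAt
  have hg : HasFDerivAt (fun w => cpair P n k w + Vq S a (fpair P k w)) _ z := hcd.add hVq
  rw [hg.fderiv]
  simp only [ContinuousLinearMap.add_apply, ContinuousLinearMap.smul_apply,
    ContinuousLinearMap.comp_apply, ContinuousLinearMap.flip_apply, smul_eq_mul]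

end StepA
section Alg
variable {T nx N : ℕ} {m : Fin N → ℕ}

lemma dot_symm {ι : Type*} [Fintype ι] {S : Matrix ι ι ℝ} (hS : Sᵀ = S) (x y : ι → ℝ) :
    x ⬝ᵥ S.mulVec y = y ⬝ᵥ S.mulVec x := by
  conv_lhs => rw [← hS]
  rw [Matrix.dotProduct_mulVec, Matrix.vecMul_transpose, dotProduct_comm]

lemma quad_Ix (Γ : Matrix (Ix nx N m) (Ix nx N m) ℝ) (w : ZIdx nx N m → ℝ) :
    (Sum.elim (fun _ => (1:ℝ)) w) ⬝ᵥ Γ.mulVec (Sum.elim (fun _ => (1:ℝ)) w)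
      = Γ (Sum.inl ()) (Sum.inl ())
        + ∑ b, Γ (Sum.inl ()) (Sum.inr b) * w b
        + ∑ a, w a * Γ (Sum.inr a) (Sum.inl ())
        + ∑ a, w a * ∑ b, Γ (Sum.inr a) (Sum.inr b) * w b := by
  simp only [dotProduct, Matrix.mulVec, Fintype.sum_sum_type, Sum.elim_inl, Sum.elim_inr]
  simp [Finset.mul_sum, Finset.sum_add_distrib, mul_add, add_assoc]
  ring

lemma quad_conj {ι κ : Type*} [Fintype ι] [Fintype κ] (A : Matrix κ ι ℝ) (S : Matrix κ κ ℝ)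
    (u : ι → ℝ) :
    u ⬝ᵥ (Aᵀ * S * A).mulVec u = (A.mulVec u) ⬝ᵥ S.mulVec (A.mulVec u) := by
  rw [← Matrix.mulVec_mulVec, ← Matrix.mulVec_mulVec, Matrix.dotProduct_mulVec,
    Matrix.vecMul_transpose]

lemma Cmat_mulVec (A : Matrix (Fin nx) (Fin nx) ℝ) (B : Matrix (Fin nx) (UIdx N m) ℝ)
    (δx : Stt nx) (δu : Inp N m) :
    (Cmat A B).mulVec (vec1 δx δu) = ecJ + linJ (A.mulVec δx + B.mulVec δu) := by
  funext j
  cases j with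
  | inl _ =>
    simp [Matrix.mulVec, dotProduct, Fintype.sum_sum_type, Cmat, vec1, ecJ]
  | inr i =>
    simp [Matrix.mulVec, dotProduct, Fintype.sum_sum_type, Cmat, vec1, ecJ]

lemma quad_Dext (D : Matrix (ZIdx nx N m) (ZIdx nx N m) ℝ) (δx : Stt nx) (δu : Inp N m) :
    (vec1 δx δu) ⬝ᵥ (Dext D).mulVec (vec1 δx δu)
      = (Sum.elim δx δu) ⬝ᵥ D.mulVec (Sum.elim δx δu) := by
  rw [show vec1 δx δu = Sum.elim (fun _ => (1:ℝ)) (Sum.elim δx δu) from rfl, quad_Ix]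
  simp [Dext, dotProduct, Matrix.mulVec]

lemma quad_sum_smul {ι κ : Type*} [Fintype ι] [Fintype κ] (c : κ → ℝ) (G : κ → Matrix ι ι ℝ)
    (w : ι → ℝ) :
    w ⬝ᵥ (∑ l, c l • G l).mulVec w = ∑ l, c l * (w ⬝ᵥ (G l).mulVec w) := by
  simp only [dotProduct, Matrix.mulVec, Matrix.sum_apply, Matrix.smul_apply, smul_eq_mul,
    Finset.sum_mul, Finset.mul_sum]
  conv_lhs => rw [show (fun (a:ι) => ∑ b : ι, ∑ l : κ, w a * (c l * G l a b * w b))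
    = (fun a => ∑ l : κ, ∑ b : ι, w a * (c l * G l a b * w b)) from
      funext fun a => Finset.sum_comm]
  rw [Finset.sum_comm]
  exact Finset.sum_congr rfl fun l _ => Finset.sum_congr rfl fun a _ =>
    Finset.sum_congr rfl fun b _ => by ring

lemma ec_dot_linJ (S : Matrix (Jx nx) (Jx nx) ℝ) (y : Stt nx) :
    (ecJ : Jx nx → ℝ) ⬝ᵥ S.mulVec (linJ y) = ∑ l, S (Sum.inl ()) (Sum.inr l) * y l := by
  simp [dotProduct, Matrix.mulVec, Fintype.sum_sum_type, ecJ]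

lemma Emat_mulVec (s : Inp N m) (K : Matrix (UIdx N m) (Fin nx) ℝ) (δx : Stt nx) :
    (Emat s K).mulVec (vecj δx) = vec1 δx (K.mulVec δx + s) := by
  funext a
  match a with
  | Sum.inl _ =>
    simp [Matrix.mulVec, dotProduct, Fintype.sum_sum_type, Emat, vecj, vec1]
  | Sum.inr (Sum.inl i) =>
    simp [Matrix.mulVec, dotProduct, Fintype.sum_sum_type, Emat, vecj, vec1,
      Finset.sum_ite_eq, Finset.sum_ite_eq']
  | Sum.inr (Sum.inr p) =>
    simp [Matrix.mulVec, dotProduct, Fintype.sum_sum_type, Emat, vecj, vec1, mul_comm,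
      add_comm]

end Alg
section MasterL
variable {T nx N : ℕ} {m : Fin N → ℕ} (P : Setup T nx N m) (ub : Seq T N m) (k : ℕ) (n : Fin N)

lemma taylor2_master (hf2 : ContDiff ℝ 2 (fpair P k)) (hc2 : ContDiff ℝ 2 (cpair P n k))
    (S : Matrix (Jx nx) (Jx nx) ℝ) (hS : Sᵀ = S) (z : Stt nx × Inp N m) :
    taylor2 (fun w => cpair P n k w + Vq S (traj P ub (k+1)) (fpair P k w)) (zbar P ub k) z
      = (1/2) * (vec1 (z.1 - traj P ub k) (z.2 - extSeq ub k) ⬝ᵥ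
          ((Mmat P ub n k
            + (Cmat (Amat P ub k) (Bmat P ub k))ᵀ * S * Cmat (Amat P ub k) (Bmat P ub k)
            + Dext (∑ l, S (Sum.inl ()) (Sum.inr l) • Gmat P ub k l)).mulVec
            (vec1 (z.1 - traj P ub k) (z.2 - extSeq ub k)))) := by
  set a := traj P ub (k+1) with ha
  set z0 := zbar P ub k with hz0
  set v := z - z0 with hv
  have hFz0 : fpair P k z0 = a := rfl
  set d := fderiv ℝ (fpair P k) z0 v with hd
  set Δ := fderiv ℝ (fun w => fderiv ℝ (fpair P k) w v) z0 v with hΔ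
  -- differentiability facts
  have hdF : Differentiable ℝ (fderiv ℝ (fpair P k)) :=
    (hf2.fderiv_right (m := 1) (by norm_num)).differentiable one_ne_zero
  have hΦd : Differentiable ℝ (fun w => fderiv ℝ (fpair P k) w v) :=
    fun w => (hdF w).clm_apply (differentiableAt_const v)
  -- term 0
  have hterm0 : cpair P n k z0 + Vq S a (fpair P k z0)
      = cpair P n k z0 + (1/2) * (ecJ ⬝ᵥ S.mulVec ecJ) := by
    rw [hFz0, Vq, sub_self, vecj_zero]
  -- term 1
  have hterm1 : fderiv ℝ (fun w => cpair P n k w + Vq S a (fpair P k w)) z0 v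
      = Sum.elim (M1x P ub n k) (M1u P ub n k) ⬝ᵥ coordZ v
        + (1/2) * (ecJ ⬝ᵥ S.mulVec (linJ d) + (linJ d) ⬝ᵥ S.mulVec ecJ) := by
    rw [fderiv_g P k n hf2 hc2 S a z0 v, hz0, fderiv_cpair_eq P ub k n v, ← hz0,
      hFz0, sub_self, vecj_zero, dpL_apply, dpL_apply, ← hd]
  -- second derivative
  have hfun : (fun w => fderiv ℝ (fun w' => cpair P n k w' + Vq S a (fpair P k w')) w v)
      = fun w => fderiv ℝ (cpair P n k) w v
        + (1/2) * (dpL S (vecj (fpair P k w - a)) (linJ (fderiv ℝ (fpair P k) w v))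
          + dpL S (linJ (fderiv ℝ (fpair P k) w v)) (vecj (fpair P k w - a))) :=
    funext fun w => fderiv_g P k n hf2 hc2 S a w v
  have hq0 := hasFDerivAt_q P k hf2 a z0
  have hΦ' : HasFDerivAt (fun w => fderiv ℝ (fpair P k) w v)
      (fderiv ℝ (fun w => fderiv ℝ (fpair P k) w v) z0) z0 := (hΦd z0).hasFDerivAt
  have hψ' : HasFDerivAt (fun w => (linJ (fderiv ℝ (fpair P k) w v) : Jx nx → ℝ))
      (linJ.comp (fderiv ℝ (fun w => fderiv ℝ (fpair P k) w v) z0)) z0 :=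
    linJ.hasFDerivAt.comp z0 hΦ'
  have hT1' : HasFDerivAt
      (fun w => dpL S (vecj (fpair P k w - a)) (linJ (fderiv ℝ (fpair P k) w v)))
      ((dpL S (vecj (fpair P k z0 - a))).comp
          (linJ.comp (fderiv ℝ (fun w => fderiv ℝ (fpair P k) w v) z0))
        + ((dpL S).comp (linJ.comp (fderiv ℝ (fpair P k) z0))).flip
            (linJ (fderiv ℝ (fpair P k) z0 v))) z0 :=
    ((dpL S).hasFDerivAt.comp z0 hq0).clm_apply hψ'
  have hT2' : HasFDerivAt
      (fun w => dpL S (linJ (fderiv ℝ (fpair P k) w v)) (vecj (fpair P k w - a)))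
      ((dpL S (linJ (fderiv ℝ (fpair P k) z0 v))).comp
          (linJ.comp (fderiv ℝ (fpair P k) z0))
        + ((dpL S).comp
            (linJ.comp (fderiv ℝ (fun w => fderiv ℝ (fpair P k) w v) z0))).flip
            (vecj (fpair P k z0 - a))) z0 :=
    ((dpL S).hasFDerivAt.comp z0 hψ').clm_apply hq0
  have hC1' : HasFDerivAt (fun w => fderiv ℝ (cpair P n k) w v)
      (fderiv ℝ (fun w => fderiv ℝ (cpair P n k) w v) z0) z0 :=
    (diff_fderiv_apply hc2 v z0).hasFDerivAt
  have hsum : HasFDerivAt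
      (fun w => fderiv ℝ (cpair P n k) w v
        + (1/2) * (dpL S (vecj (fpair P k w - a)) (linJ (fderiv ℝ (fpair P k) w v))
          + dpL S (linJ (fderiv ℝ (fpair P k) w v)) (vecj (fpair P k w - a))))
      ((fderiv ℝ (fun w => fderiv ℝ (cpair P n k) w v) z0)
        + (1/2 : ℝ) • (((dpL S (vecj (fpair P k z0 - a))).comp
              (linJ.comp (fderiv ℝ (fun w => fderiv ℝ (fpair P k) w v) z0))
            + ((dpL S).comp (linJ.comp (fderiv ℝ (fpair P k) z0))).flip
                (linJ (fderiv ℝ (fpair P k) z0 v)))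
          + ((dpL S (linJ (fderiv ℝ (fpair P k) z0 v))).comp
              (linJ.comp (fderiv ℝ (fpair P k) z0))
            + ((dpL S).comp
                (linJ.comp (fderiv ℝ (fun w => fderiv ℝ (fpair P k) w v) z0))).flip
                (vecj (fpair P k z0 - a))))) z0 :=
    hC1'.add ((hT1'.add hT2').const_mul (1/2 : ℝ))
  have hterm2 : fderiv ℝ
      (fun w => fderiv ℝ (fun w' => cpair P n k w' + Vq S a (fpair P k w')) w v) z0 v
      = coordZ v ⬝ᵥ (M2 P ub n k).mulVec (coordZ v)
        + (1/2) * ((ecJ ⬝ᵥ S.mulVec (linJ Δ) + (linJ d) ⬝ᵥ S.mulVec (linJ d))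
          + ((linJ d) ⬝ᵥ S.mulVec (linJ d) + (linJ Δ) ⬝ᵥ S.mulVec ecJ)) := by
    rw [hfun, hsum.fderiv]
    simp only [ContinuousLinearMap.add_apply, ContinuousLinearMap.smul_apply,
      ContinuousLinearMap.comp_apply, ContinuousLinearMap.flip_apply, smul_eq_mul]
    rw [hz0, fderiv2_cpair_eq P ub k n hc2 v v, ← hz0, hFz0, sub_self, vecj_zero]
    simp only [dpL_apply, ← hd, ← hΔ]
  -- component formulas
  have hd_eq : d = (Amat P ub k).mulVec v.1 + (Bmat P ub k).mulVec v.2 := by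
    rw [hd, hz0]; exact fderiv_fpair_eq P ub k hf2 v
  have hΔ_eq : ∀ l, Δ l = coordZ v ⬝ᵥ (Gmat P ub k l).mulVec (coordZ v) := by
    intro l
    rw [hΔ, hz0]
    exact congrFun (fderiv2_fpair_eq P ub k hf2 v v) l
  -- expand LHS
  simp only [taylor2]
  rw [← hv, hterm1, hterm0, hterm2]
  -- expand RHS
  rw [Matrix.add_mulVec, Matrix.add_mulVec, dotProduct_add, dotProduct_add]
  have hvec1 : vec1 (z.1 - traj P ub k) (z.2 - extSeq ub k)
      = Sum.elim (fun _ => (1:ℝ)) (coordZ v) := rfl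
  rw [hvec1]
  rw [quad_Ix (Mmat P ub n k) (coordZ v)]
  rw [show Sum.elim (fun _ => (1:ℝ)) (coordZ v) = vec1 v.1 v.2 from rfl]
  rw [quad_conj, Cmat_mulVec, ← hd_eq]
  rw [quad_Dext, quad_sum_smul]
  rw [show (Sum.elim v.1 v.2 : ZIdx nx N m → ℝ) = coordZ v from rfl]
  rw [add_dotProduct, Matrix.mulVec_add, dotProduct_add, dotProduct_add]
  -- block values of Mmat
  have hM11 : Mmat P ub n k (Sum.inl ()) (Sum.inl ())
      = 2 * P.c n k (traj P ub k) (extSeq ub k) := rfl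
  have hM1z : ∀ b, Mmat P ub n k (Sum.inl ()) (Sum.inr b)
      = Sum.elim (M1x P ub n k) (M1u P ub n k) b := fun b => rfl
  have hMz1 : ∀ a', Mmat P ub n k (Sum.inr a') (Sum.inl ())
      = Sum.elim (M1x P ub n k) (M1u P ub n k) a' := fun a' => rfl
  have hMzz : ∀ a' b, Mmat P ub n k (Sum.inr a') (Sum.inr b) = M2 P ub n k a' b :=
    fun a' b => rfl
  simp only [hM11, hM1z, hMz1, hMzz]
  -- symmetric rewrites
  rw [dot_symm hS (linJ Δ) ecJ]
  rw [show ∑ l, S (Sum.inl ()) (Sum.inr l) * (coordZ v ⬝ᵥ (Gmat P ub k l).mulVec (coordZ v))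
      = ecJ ⬝ᵥ S.mulVec (linJ Δ) by
    rw [ec_dot_linJ]
    exact Finset.sum_congr rfl fun l _ => by rw [hΔ_eq l]]
  -- scalar sums to dot products
  have hs1 : ∑ b, Sum.elim (M1x P ub n k) (M1u P ub n k) b * coordZ v b
      = Sum.elim (M1x P ub n k) (M1u P ub n k) ⬝ᵥ coordZ v := rfl
  have hs2 : ∑ a', coordZ v a' * Sum.elim (M1x P ub n k) (M1u P ub n k) a'
      = Sum.elim (M1x P ub n k) (M1u P ub n k) ⬝ᵥ coordZ v := by
    rw [← hs1]; exact Finset.sum_congr rfl fun b _ => mul_comm _ _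
  have hs3 : ∑ a', coordZ v a' * ∑ b, M2 P ub n k a' b * coordZ v b
      = coordZ v ⬝ᵥ (M2 P ub n k).mulVec (coordZ v) := rfl
  rw [hs1, hs2, hs3]
  rw [show cpair P n k z0 = P.c n k (traj P ub k) (extSeq ub k) from rfl]
  ring
end MasterL
section Symm
variable {T nx N : ℕ} {m : Fin N → ℕ} (P : Setup T nx N m) (ub : Seq T N m) (k : ℕ) (n : Fin N)

lemma M2_symm (hc2 : ContDiff ℝ 2 (cpair P n k)) (w w' : ZIdx nx N m) :
    M2 P ub n k w w' = M2 P ub n k w' w :=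
  snd_symm hc2 (zbar P ub k) (zbasis w) (zbasis w')

lemma Mmat_symm (hc2 : ContDiff ℝ 2 (cpair P n k)) :
    (Mmat P ub n k)ᵀ = Mmat P ub n k := by
  ext a b
  rw [Matrix.transpose_apply]
  match a, b with
  | Sum.inl _, Sum.inl _ => rfl
  | Sum.inl _, Sum.inr w => rfl
  | Sum.inr w, Sum.inl _ => rfl
  | Sum.inr w, Sum.inr w' => exact M2_symm P ub k n hc2 w' w

lemma Gmat_symm (hf2 : ContDiff ℝ 2 (fpair P k)) (l : Fin nx) :
    (Gmat P ub k l)ᵀ = Gmat P ub k l := by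
  ext a b
  rw [Matrix.transpose_apply]
  exact snd_symm (contDiff_fl P k hf2 l) (zbar P ub k) (zbasis b) (zbasis a)

lemma Dext_transpose (D : Matrix (ZIdx nx N m) (ZIdx nx N m) ℝ) :
    (Dext D)ᵀ = Dext Dᵀ := by
  ext a b
  rw [Matrix.transpose_apply]
  match a, b with
  | Sum.inl _, Sum.inl _ => rfl
  | Sum.inl _, Sum.inr w => rfl
  | Sum.inr w, Sum.inl _ => rfl
  | Sum.inr w, Sum.inr w' => rfl

lemma gammaFam_symm (S : Fin N → Matrix (Jx nx) (Jx nx) ℝ)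
    (D : Fin N → Matrix (ZIdx nx N m) (ZIdx nx N m) ℝ)
    (hf2 : ContDiff ℝ 2 (fpair P k)) (hc2 : ContDiff ℝ 2 (cpair P n k))
    (hS : (S n)ᵀ = S n) (hD : (D n)ᵀ = D n) :
    (gammaFam P ub S k D n)ᵀ = gammaFam P ub S k D n := by
  unfold gammaFam
  rw [Matrix.transpose_add, Matrix.transpose_add, Mmat_symm P ub k n hc2,
    Dext_transpose, hD, Matrix.transpose_mul, Matrix.transpose_mul,
    Matrix.transpose_transpose, hS, Matrix.mul_assoc]

lemma subPolicy_symm (Γ : Fin N → Matrix (Ix nx N m) (Ix nx N m) ℝ)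
    (hΓ : (Γ n)ᵀ = Γ n) : (subPolicy Γ n)ᵀ = subPolicy Γ n := by
  unfold subPolicy
  rw [Matrix.transpose_mul, Matrix.transpose_mul, Matrix.transpose_transpose, hΓ,
    Matrix.mul_assoc]

lemma Dsum_symm (S : Matrix (Jx nx) (Jx nx) ℝ) (hf2 : ContDiff ℝ 2 (fpair P k)) :
    (∑ l, S (Sum.inl ()) (Sum.inr l) • Gmat P ub k l)ᵀ
      = ∑ l, S (Sum.inl ()) (Sum.inr l) • Gmat P ub k l := by
  rw [Matrix.transpose_sum]
  exact Finset.sum_congr rfl fun l _ => by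
    rw [Matrix.transpose_smul, Gmat_symm P ub k hf2 l]

end Symm
section MainAux
variable {T nx N : ℕ} {m : Fin N → ℕ}

lemma main_aux (P : Setup T nx N m) (ub : Seq T N m)
    (hf : ∀ k ≤ T, ContDiff ℝ 2 (fpair P k))
    (hc : ∀ n : Fin N, ∀ k ≤ T, ContDiff ℝ 2 (cpair P n k)) :
    ∀ j, j ≤ T + 1 → ∀ n : Fin N,
      ((ddpSAux P ub j n)ᵀ = ddpSAux P ub j n) ∧
      (∀ x : Stt nx, ddpVAux P ub j n x
        = Vq (ddpSAux P ub j n) (traj P ub (T + 1 - j)) x) := by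
  intro j
  induction j with
  | zero =>
    intro _ n
    refine ⟨by simp [ddpSAux], fun x => ?_⟩
    simp [ddpSAux, ddpVAux, Vq]
  | succ j ih =>
    intro hj n
    have hjT : j ≤ T := by omega
    have ihs := ih (by omega)
    have hkT : T - j ≤ T := Nat.sub_le _ _
    have hf2 := hf (T - j) hkT
    have hc2 := hc n (T - j) hkT
    have hTT : T - (T - j) = j := by omega
    -- identification of the Γ family
    have hgam : ddpGamma P ub (T - j)
        = gammaFam P ub (ddpSAux P ub j) (T - j)
            (fun n' => ∑ l, (ddpSAux P ub j n') (Sum.inl ()) (Sum.inr l)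
              • Gmat P ub (T - j) l) := by
      unfold ddpGamma ddpD
      rw [hTT]
    have hΓsym : (gammaFam P ub (ddpSAux P ub j) (T - j)
        (fun n' => ∑ l, (ddpSAux P ub j n') (Sum.inl ()) (Sum.inr l)
          • Gmat P ub (T - j) l) n)ᵀ
        = gammaFam P ub (ddpSAux P ub j) (T - j)
            (fun n' => ∑ l, (ddpSAux P ub j n') (Sum.inl ()) (Sum.inr l)
              • Gmat P ub (T - j) l) n :=
      gammaFam_symm P ub (T - j) n _ _ hf2 hc2 (ihs n).1
        (Dsum_symm P ub (T - j) _ hf2)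
    have hSnew : ddpSAux P ub (j+1)
        = subPolicy (gammaFam P ub (ddpSAux P ub j) (T - j)
            (fun n' => ∑ l, (ddpSAux P ub j n') (Sum.inl ()) (Sum.inr l)
              • Gmat P ub (T - j) l)) := rfl
    constructor
    · rw [hSnew]
      exact subPolicy_symm n _ hΓsym
    · intro x
      have hfun : (fun z => cpair P n (T - j) z + ddpVAux P ub j n (fpair P (T - j) z))
          = fun z => cpair P n (T - j) z
              + Vq (ddpSAux P ub j n) (traj P ub ((T - j) + 1)) (fpair P (T - j) z) :=
        funext fun z => by
          rw [(ihs n).2, show T + 1 - j = (T - j) + 1 from by omega]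
      have hVstep : ddpVAux P ub (j+1) n x
          = taylor2 (fun z => cpair P n (T - j) z + ddpVAux P ub j n (fpair P (T - j) z))
              (zbar P ub (T - j))
              (x, extSeq ub (T - j)
                + (ddpK P ub (T - j) *ᵥ (x - traj P ub (T - j)) + ddps P ub (T - j))) := rfl
      rw [hVstep, hfun]
      rw [taylor2_master P ub (T - j) n hf2 hc2 (ddpSAux P ub j n) (ihs n).1
        (x, extSeq ub (T - j)
          + (ddpK P ub (T - j) *ᵥ (x - traj P ub (T - j)) + ddps P ub (T - j)))]
      rw [show (x, extSeq ub (T - j)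
          + (ddpK P ub (T - j) *ᵥ (x - traj P ub (T - j)) + ddps P ub (T - j))).1
          = x from rfl]
      rw [show (x, extSeq ub (T - j)
          + (ddpK P ub (T - j) *ᵥ (x - traj P ub (T - j)) + ddps P ub (T - j))).2
          = extSeq ub (T - j)
            + (ddpK P ub (T - j) *ᵥ (x - traj P ub (T - j)) + ddps P ub (T - j)) from rfl]
      rw [add_sub_cancel_left]
      have hKs : ddpK P ub (T - j) = Kof (gammaFam P ub (ddpSAux P ub j) (T - j)
          (fun n' => ∑ l, (ddpSAux P ub j n') (Sum.inl ()) (Sum.inr l)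
            • Gmat P ub (T - j) l)) := by rw [ddpK, hgam]
      have hss : ddps P ub (T - j) = sof (gammaFam P ub (ddpSAux P ub j) (T - j)
          (fun n' => ∑ l, (ddpSAux P ub j n') (Sum.inl ()) (Sum.inr l)
            • Gmat P ub (T - j) l)) := by rw [ddps, hgam]
      rw [hKs, hss, ← Emat_mulVec, ← quad_conj]
      rw [show T + 1 - (j + 1) = T - j from by omega]
      rfl
end MainAux
/-- the functions Q̃_{n,k}, Ṽ_{n,k} of the approximate Bellman recursion are the
quadratic forms given by the matrices Γ̃_{n,k}, S̃_{n,k} of the DDP backward recursion. -/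
theorem statement2 (T nx N : ℕ) (m : Fin N → ℕ) (hnx : 1 ≤ nx) (P : Setup T nx N m)
    (hf : ∀ k ≤ T, ContDiff ℝ 2 (fpair P k))
    (hc : ∀ n : Fin N, ∀ k ≤ T, ContDiff ℝ 2 (cpair P n k))
    (ub : Seq T N m)
    (hFinv : ∀ k ≤ T, IsUnit (ddpF P ub k)) :
    ∀ (n : Fin N), ∀ k ≤ T,
      (∀ (x : Stt nx) (u : Inp N m),
        ddpQ P ub k n x u
          = (1 / 2) * (vec1 (x - traj P ub k) (u - extSeq ub k) ⬝ᵥ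
              (ddpGamma P ub k n *ᵥ vec1 (x - traj P ub k) (u - extSeq ub k)))) ∧
      (∀ x : Stt nx,
        ddpV P ub k n x
          = (1 / 2) * (vecj (x - traj P ub k) ⬝ᵥ
              (ddpSmat P ub k n *ᵥ vecj (x - traj P ub k)))) := by
  intro n k hk
  have haux := main_aux P ub hf hc
  constructor
  · intro x u
    have h1 : ∀ y, ddpVAux P ub (T - k) n y
        = Vq (ddpSAux P ub (T - k) n) (traj P ub (k + 1)) y := by
      intro y
      rw [(haux (T - k) (by omega) n).2 y, show T + 1 - (T - k) = k + 1 from by omega]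
    have hfun : (fun z => cpair P n k z + ddpVAux P ub (T - k) n (fpair P k z))
        = fun z => cpair P n k z
            + Vq (ddpSAux P ub (T - k) n) (traj P ub (k + 1)) (fpair P k z) :=
      funext fun z => by rw [h1]
    have hQ : ddpQ P ub k n x u
        = taylor2 (fun z => cpair P n k z + ddpVAux P ub (T - k) n (fpair P k z))
            (zbar P ub k) (x, u) := rfl
    rw [hQ, hfun,
      taylor2_master P ub k n (hf k hk) (hc n k hk) (ddpSAux P ub (T - k) n)
        (haux (T - k) (by omega) n).1 (x, u)]
    rfl
  · intro x
    have h1 := (haux (T + 1 - k) (by omega) n).2 x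
    rw [show T + 1 - (T + 1 - k) = k from by omega] at h1
    have hV : ddpV P ub k n x = ddpVAux P ub (T + 1 - k) n x := rfl
    rw [hV, h1]
    rfl

end DynGame
end
end

section
/- For every player n, every nominal input sequence ū, and every direction δu: D²J_n(ū)[δu, δu] = Σ_{k=0}^T [δx_k; δu_k]ᵀ [[M_{n,k}^{xx}, M_{n,k}^{xu}],[M_{n,k}^{ux}, M_{n,k}^{uu}]] [δx_k; δu_k] + Σ_{k=0}^T M_{n,k}^{1x} Δx_k, where δx_k and Δx_k are the first- and second-order sensitivities of x_k at ū along δu. -/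
open Matrix BigOperators Filter

noncomputable section

namespace DynGame

variable {T nx N : ℕ} {m : Fin N → ℕ}

/-!
Each stage cost enters `J_n` as `c_{n,k} ∘ z_k` with `z_k(u) = (x_k(u), u_k)`. The chain rule to
second order gives `D²(g ∘ z)[v, v] = D²g[Dz v, Dz v] + Dg[D²z[v, v]]`. Here
`Dz_k v = (δx_k, δu_k)`, and since `u ↦ u_k` is linear, `D²z_k[v, v] = (Δx_k, 0)`; expanding
both terms in the coordinate basis of `(x, u)` gives the quadratic form in
`M^{xx}, M^{xu}, M^{ux}, M^{uu}` and the term `M^{1x} Δx_k`.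
-/

section SecondDerivative

variable {E F G : Type*} [NormedAddCommGroup E] [NormedSpace ℝ E]
  [NormedAddCommGroup F] [NormedSpace ℝ F] [NormedAddCommGroup G] [NormedSpace ℝ G]

theorem _root_.ContDiff.differentiable_fderiv_apply {f : E → F} (hf : ContDiff ℝ 2 f) (v : E) :
    Differentiable ℝ (fun u => fderiv ℝ f u v) :=
  ((hf.fderiv_right (m := 1) (by norm_num)).differentiable one_ne_zero).clm_apply
    (differentiable_const v)

theorem fderiv_clm_apply_const_apply {c : E → F →L[ℝ] G} {x : E} (hc : DifferentiableAt ℝ c x)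
    (v : F) (w : E) : fderiv ℝ (fun y => c y v) x w = fderiv ℝ c x w v := by
  simp [fderiv_clm_apply hc (differentiableAt_const v)]

theorem fderiv_apply_apply {ι : Type*} [Fintype ι] {Φ : E → ι → ℝ} {x : E}
    (hΦ : DifferentiableAt ℝ Φ x) (i : ι) (v : E) :
    fderiv ℝ (fun y => Φ y i) x v = fderiv ℝ Φ x v i := by
  rw [fderiv_apply hΦ i]
  rfl

theorem fderiv_fderiv_fun_sum_apply {ι : Type*} {s : Finset ι} {f : ι → E → F}
    (hf : ∀ i ∈ s, ContDiff ℝ 2 (f i)) (x v : E) :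
    fderiv ℝ (fun u => fderiv ℝ (fun y => ∑ i ∈ s, f i y) u v) x v
      = ∑ i ∈ s, fderiv ℝ (fun u => fderiv ℝ (f i) u v) x v := by
  have hfirst : (fun u => fderiv ℝ (fun y => ∑ i ∈ s, f i y) u v)
      = fun u => ∑ i ∈ s, fderiv ℝ (f i) u v := by
    funext u
    rw [fderiv_fun_sum fun i hi => ((hf i hi).differentiable two_ne_zero) u,
      _root_.sum_apply]
  rw [hfirst, fderiv_fun_sum fun i hi => ((hf i hi).differentiable_fderiv_apply v) x,
    _root_.sum_apply]

theorem fderiv_fderiv_comp_apply {g : F → G} {φ : E → F} (hg : ContDiff ℝ 2 g)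
    (hφ : ContDiff ℝ 2 φ) (x v : E) :
    fderiv ℝ (fun u => fderiv ℝ (g ∘ φ) u v) x v
      = fderiv ℝ (fderiv ℝ g) (φ x) (fderiv ℝ φ x v) (fderiv ℝ φ x v)
        + fderiv ℝ g (φ x) (fderiv ℝ (fun u => fderiv ℝ φ u v) x v) := by
  have hg' : Differentiable ℝ (fderiv ℝ g) :=
    (hg.fderiv_right (m := 1) (by norm_num)).differentiable one_ne_zero
  have hφd : Differentiable ℝ φ := hφ.differentiable two_ne_zero
  have hchain : (fun u => fderiv ℝ (g ∘ φ) u v)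
      = fun u => (fderiv ℝ g ∘ φ) u (fderiv ℝ φ u v) := by
    funext u
    rw [fderiv_comp u ((hg.differentiable two_ne_zero) (φ u)) (hφd u)]
    rfl
  rw [hchain, fderiv_clm_apply ((hg' (φ x)).comp x (hφd x)) (hφ.differentiable_fderiv_apply v x),
    fderiv_comp x (hg' (φ x)) (hφd x)]
  simp only [_root_.add_apply, ContinuousLinearMap.comp_apply,
    ContinuousLinearMap.flip_apply, Function.comp_apply]
  exact add_comm _ _

end SecondDerivative

theorem pair_eq_sum_zbasis (a : Stt nx) (b : Inp N m) :
    ((a, b) : Stt nx × Inp N m) = ∑ w, Sum.elim a b w • zbasis w := by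
  rw [Fintype.sum_sum_type]
  ext <;> simp [zbasis, Prod.fst_sum, Prod.snd_sum, Finset.sum_apply, Pi.single_apply]

theorem ContinuousLinearMap.apply_pair_eq_sum {G : Type*} [NormedAddCommGroup G]
    [NormedSpace ℝ G] (L : Stt nx × Inp N m →L[ℝ] G) (a : Stt nx) (b : Inp N m) :
    L (a, b) = ∑ w, Sum.elim a b w • L (zbasis w) := by
  rw [pair_eq_sum_zbasis, map_sum]
  simp only [map_smul]

theorem fderiv_cpair_apply_fst (P : Setup T nx N m) (ub : Seq T N m) (n : Fin N) (k : ℕ)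
    (a : Stt nx) :
    fderiv ℝ (cpair P n k) (zbar P ub k) (a, 0) = M1x P ub n k ⬝ᵥ a := by
  rw [ContinuousLinearMap.apply_pair_eq_sum, Fintype.sum_sum_type]
  simp [dotProduct, M1x, mul_comm]

theorem fderiv_fderiv_cpair_apply (P : Setup T nx N m) (ub : Seq T N m) (n : Fin N) (k : ℕ)
    (hc : ContDiff ℝ 2 (cpair P n k)) (a : Stt nx) (b : Inp N m) :
    fderiv ℝ (fderiv ℝ (cpair P n k)) (zbar P ub k) (a, b) (a, b)
      = Sum.elim a b ⬝ᵥ (M2 P ub n k *ᵥ Sum.elim a b) := by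
  have hc' : DifferentiableAt ℝ (fderiv ℝ (cpair P n k)) (zbar P ub k) :=
    (hc.fderiv_right (m := 1) (by norm_num)).differentiable one_ne_zero _
  -- `M2` lists `D²c` with its two arguments swapped, which the quadratic form does not see.
  have hM2 : ∀ w w', M2 P ub n k w w'
      = fderiv ℝ (fderiv ℝ (cpair P n k)) (zbar P ub k) (zbasis w') (zbasis w) :=
    fun w w' => fderiv_clm_apply_const_apply hc' (zbasis w) (zbasis w')
  rw [ContinuousLinearMap.apply_pair_eq_sum (fderiv ℝ (fderiv ℝ (cpair P n k)) (zbar P ub k)),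
    _root_.sum_apply]
  simp only [_root_.smul_apply, ContinuousLinearMap.apply_pair_eq_sum _ a b,
    dotProduct, mulVec, hM2, Finset.mul_sum, smul_eq_mul]
  rw [Finset.sum_comm]
  exact Finset.sum_congr rfl fun w _ => Finset.sum_congr rfl fun w' _ => by ring

section Sensitivities

variable (P : Setup T nx N m)

theorem extSeq_eq_proj {k : ℕ} (hk : k < T + 1) :
    (fun u : Seq T N m => extSeq u k)
      = ⇑(ContinuousLinearMap.proj (R := ℝ) (φ := fun _ : Fin (T + 1) => Inp N m) ⟨k, hk⟩) := by
  funext u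
  simp [extSeq, hk]

theorem contDiff_extSeq {r : WithTop ℕ∞} {k : ℕ} (hk : k < T + 1) :
    ContDiff ℝ r (fun u : Seq T N m => extSeq u k) := by
  rw [extSeq_eq_proj hk]
  exact ContinuousLinearMap.contDiff _

theorem fderiv_extSeq_apply {k : ℕ} (hk : k < T + 1) (x v : Seq T N m) :
    fderiv ℝ (fun u : Seq T N m => extSeq u k) x v = extSeq v k := by
  rw [extSeq_eq_proj hk, ContinuousLinearMap.fderiv]
  simp [extSeq, hk]

theorem contDiff_traj {r : WithTop ℕ∞} (hf : ∀ k ≤ T, ContDiff ℝ r (fpair P k)) :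
    ∀ k ≤ T + 1, ContDiff ℝ r (fun u : Seq T N m => traj P u k)
  | 0, _ => contDiff_const
  | k + 1, hk =>
    (hf k (by omega)).comp ((contDiff_traj hf k (by omega)).prodMk (contDiff_extSeq (by omega)))

theorem contDiff_zbar {r : WithTop ℕ∞} (hf : ∀ k ≤ T, ContDiff ℝ r (fpair P k)) {k : ℕ}
    (hk : k ≤ T) : ContDiff ℝ r (fun u => zbar P u k) :=
  (contDiff_traj P hf k (by omega)).prodMk (contDiff_extSeq (by omega))

theorem dx1_eq_fderiv {ub : Seq T N m} {k : ℕ}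
    (htraj : DifferentiableAt ℝ (fun u => traj P u k) ub) (δu : Seq T N m) :
    dx1 P ub δu k = fderiv ℝ (fun u => traj P u k) ub δu :=
  funext fun l => fderiv_apply_apply htraj l δu

theorem dx2_eq_fderiv {k : ℕ} (htraj : ContDiff ℝ 2 (fun u => traj P u k)) (ub δu : Seq T N m) :
    dx2 P ub δu k = fderiv ℝ (fun u => fderiv ℝ (fun u' => traj P u' k) u δu) ub δu := by
  funext l
  have hinner : (fun u => fderiv ℝ (fun u' => traj P u' k l) u δu)
      = fun u => fderiv ℝ (fun u' => traj P u' k) u δu l :=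
    funext fun u => fderiv_apply_apply (htraj.differentiable two_ne_zero u) l δu
  rw [dx2, hinner]
  exact fderiv_apply_apply (htraj.differentiable_fderiv_apply δu ub) l δu

theorem fderiv_zbar_apply {k : ℕ} (hk : k ≤ T) {x : Seq T N m}
    (htraj : DifferentiableAt ℝ (fun u => traj P u k) x) (v : Seq T N m) :
    fderiv ℝ (fun u => zbar P u k) x v = (fderiv ℝ (fun u => traj P u k) x v, extSeq v k) := by
  unfold zbar
  rw [DifferentiableAt.fderiv_prodMk htraj
    ((contDiff_extSeq (r := 1) (by omega)).differentiable one_ne_zero x)]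
  exact Prod.ext rfl (fderiv_extSeq_apply (by omega) x v)

theorem fderiv_fderiv_zbar_apply {k : ℕ} (hk : k ≤ T)
    (htraj : ContDiff ℝ 2 (fun u => traj P u k)) (ub δu : Seq T N m) :
    fderiv ℝ (fun u => fderiv ℝ (fun u => zbar P u k) u δu) ub δu = (dx2 P ub δu k, 0) := by
  have hfirst : (fun u => fderiv ℝ (fun u => zbar P u k) u δu)
      = fun u => (fderiv ℝ (fun u => traj P u k) u δu, extSeq δu k) :=
    funext fun u => fderiv_zbar_apply P hk (htraj.differentiable two_ne_zero u) δu
  rw [hfirst, DifferentiableAt.fderiv_prodMk (htraj.differentiable_fderiv_apply δu ub)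
    (differentiableAt_const _), dx2_eq_fderiv P htraj]
  simp

theorem fderiv_fderiv_stageCost_apply (hf : ∀ k ≤ T, ContDiff ℝ 2 (fpair P k)) {n : Fin N}
    {k : ℕ} (hc : ContDiff ℝ 2 (cpair P n k)) (hk : k ≤ T) (ub δu : Seq T N m) :
    fderiv ℝ (fun u => fderiv ℝ (fun u => cpair P n k (zbar P u k)) u δu) ub δu
      = Sum.elim (dx1 P ub δu k) (extSeq δu k) ⬝ᵥ
          (M2 P ub n k *ᵥ Sum.elim (dx1 P ub δu k) (extSeq δu k))
        + M1x P ub n k ⬝ᵥ dx2 P ub δu k := by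
  have htraj := contDiff_traj P hf k (by omega)
  have htraj' := htraj.differentiable two_ne_zero ub
  rw [← fderiv_fderiv_cpair_apply P ub n k hc, ← fderiv_cpair_apply_fst,
    ← fderiv_fderiv_zbar_apply P hk htraj, dx1_eq_fderiv P htraj', ← fderiv_zbar_apply P hk htraj']
  exact fderiv_fderiv_comp_apply hc (contDiff_zbar P hf hk) ub δu

end Sensitivities

theorem statement7_general (T nx N : ℕ) (m : Fin N → ℕ) (P : Setup T nx N m)
    (hf : ∀ k ≤ T, ContDiff ℝ 2 (fpair P k))
    (hc : ∀ n : Fin N, ∀ k ≤ T, ContDiff ℝ 2 (cpair P n k)) :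
    ∀ (n : Fin N) (ub δu : Seq T N m),
      fderiv ℝ (fun u => fderiv ℝ (J P n) u δu) ub δu
        = ∑ k ∈ Finset.range (T + 1),
            Sum.elim (dx1 P ub δu k) (extSeq δu k) ⬝ᵥ
              (M2 P ub n k *ᵥ Sum.elim (dx1 P ub δu k) (extSeq δu k))
          + ∑ k ∈ Finset.range (T + 1), M1x P ub n k ⬝ᵥ dx2 P ub δu k := by
  intro n ub δu
  have hle : ∀ k ∈ Finset.range (T + 1), k ≤ T := fun _ => Finset.mem_range_succ_iff.mp
  rw [← Finset.sum_add_distrib]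
  calc fderiv ℝ (fun u => fderiv ℝ (J P n) u δu) ub δu
      = ∑ k ∈ Finset.range (T + 1),
          fderiv ℝ (fun u => fderiv ℝ (fun u => cpair P n k (zbar P u k)) u δu) ub δu :=
        fderiv_fderiv_fun_sum_apply
          (fun k hk => (hc n k (hle k hk)).comp (contDiff_zbar P hf (hle k hk))) ub δu
    _ = _ := Finset.sum_congr rfl fun k hk =>
        fderiv_fderiv_stageCost_apply P hf (hc n k (hle k hk)) (hle k hk) ub δu

/-- D²J_n(ū)[δu,δu] = Σ_k [δx_k;δu_k]ᵀ [[M^{xx},M^{xu}],[M^{ux},M^{uu}]] [δx_k;δu_k]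
+ Σ_k M_{n,k}^{1x} Δx_k, with δx_k, Δx_k the first- and second-order sensitivities of x_k. -/
theorem statement7 (T nx N : ℕ) (m : Fin N → ℕ) (hnx : 1 ≤ nx) (P : Setup T nx N m)
    (hf : ∀ k ≤ T, ContDiff ℝ 2 (fpair P k))
    (hc : ∀ n : Fin N, ∀ k ≤ T, ContDiff ℝ 2 (cpair P n k)) :
    ∀ (n : Fin N) (ub δu : Seq T N m),
      fderiv ℝ (fun u => fderiv ℝ (J P n) u δu) ub δu
        = ∑ k ∈ Finset.range (T + 1),
            Sum.elim (dx1 P ub δu k) (extSeq δu k) ⬝ᵥ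
              (M2 P ub n k *ᵥ Sum.elim (dx1 P ub δu k) (extSeq δu k))
          + ∑ k ∈ Finset.range (T + 1), M1x P ub n k ⬝ᵥ dx2 P ub δu k :=
  statement7_general T nx N m P hf hc

end DynGame
end
end

section
/- For all n and k: Q_{n,k}(δx, Δx, δu) = ½ ( [1, δxᵀ, δuᵀ] Γ_{n,k} [1; δx; δu] + Ω_{n,k} Δx ) and V_{n,k}(δx, Δx) = ½ ( [1, δxᵀ] S_{n,k} [1; δx] + Ω_{n,k} Δx ), where Γ_{n,k}, S_{n,k} and Ω_{n,k} are the matrices produced by the Newton backward recursion at ū; moreover, for each fixed (δx, Δx), the input δu = K_k δx + s_k is the unique joint stationary point of the maps δu_n ↦ Q_{n,k}(δx, Δx, δu). -/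
open Matrix BigOperators Filter

noncomputable section

namespace DynGame

variable {T nx N : ℕ} {m : Fin N → ℕ}

/-!
Both Bellman formulas come from unrolling one stage at a time. If `V_{n,k+1}` is the quadratic
form of `S_{n,k+1}` plus the linear term `Ω_{n,k+1} Δx`, then substituting the linearised dynamics
`[1; A δx + B δu] = C [1; δx; δu]` into `Q_{n,k}` gives the quadratic form of
`M_{n,k} + Cᵀ S_{n,k+1} C`, while the second-order term `Ω_{n,k+1} R_k(δx, δu)` is exactly the
quadratic form of `D_{n,k}`; so `Q_{n,k}` is the form of `Γ_{n,k}`, and inserting the policy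
`[1; δx; K δx + s] = E [1; δx]` turns it into the form of `Eᵀ Γ_{n,k} E = S_{n,k}`.

Each `Γ_{n,k}` is symmetric, because Hessians of `C²` maps are. Hence the partial gradient of
`Q_{n,k}` in the block `δu_n` is the `u_n` block row of `Γ_{n,k} [1; δx; δu]`; stacked over the
players it is `H_k + P_k δx + F_k δu`, which vanishes iff `δu = K_k δx + s_k` as `F_k` is
invertible.
-/

section QuadraticForms

variable {α ι κ : Type*} [CommSemiring α]

theorem dotProduct_transpose_mul_mul_mulVec [Fintype ι] [Fintype κ] (C : Matrix κ ι α)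
    (S : Matrix κ κ α) (v : ι → α) :
    v ⬝ᵥ ((Cᵀ * S * C) *ᵥ v) = (C *ᵥ v) ⬝ᵥ (S *ᵥ (C *ᵥ v)) := by
  rw [Matrix.mul_assoc, ← mulVec_mulVec, dotProduct_mulVec, vecMul_transpose, ← mulVec_mulVec]

theorem dotProduct_sum_smul_mulVec [Fintype ι] {L : Type*} [Fintype L] (ω : L → α)
    (G : L → Matrix ι ι α) (z : ι → α) :
    z ⬝ᵥ ((∑ l, ω l • G l) *ᵥ z) = ∑ l, ω l * (z ⬝ᵥ (G l *ᵥ z)) := by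
  simp only [sum_mulVec, dotProduct_sum, smul_mulVec, dotProduct_smul, smul_eq_mul]

theorem _root_.Matrix.IsSymm.transpose_mul_mul [Fintype κ] (C : Matrix κ ι α)
    {S : Matrix κ κ α} (hS : S.IsSymm) : (Cᵀ * S * C).IsSymm := by
  rw [IsSymm, transpose_mul, transpose_mul, transpose_transpose, hS.eq, Matrix.mul_assoc]

theorem _root_.Matrix.isSymm_sum {L : Type*} (s : Finset L) {A : L → Matrix ι ι α}
    (hA : ∀ l ∈ s, (A l).IsSymm) : (∑ l ∈ s, A l).IsSymm := by
  rw [IsSymm, transpose_sum]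
  exact Finset.sum_congr rfl fun l hl => (hA l hl).eq

end QuadraticForms

section Derivatives

variable {E : Type*} [NormedAddCommGroup E] [NormedSpace ℝ E] {ι : Type*} [Fintype ι]

theorem hasFDerivAt_dotProduct {𝕜 F : Type*} [NontriviallyNormedField 𝕜]
    [NormedAddCommGroup F] [NormedSpace 𝕜 F] {f g : F → ι → 𝕜} {f' g' : F →L[𝕜] ι → 𝕜} {x : F}
    (hf : HasFDerivAt f f' x) (hg : HasFDerivAt g g' x) :
    HasFDerivAt (fun y => f y ⬝ᵥ g y)
      (∑ i, (f x i • (ContinuousLinearMap.proj i).comp g'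
        + g x i • (ContinuousLinearMap.proj i).comp f')) x :=
  HasFDerivAt.fun_sum fun i _ => (hasFDerivAt_pi'.1 hf i).mul (hasFDerivAt_pi'.1 hg i)

theorem fderiv_half_quadForm_apply {Γ : Matrix ι ι ℝ} (hΓ : Γ.IsSymm) (c : ℝ)
    {f : E → ι → ℝ} {f' : E →L[ℝ] ι → ℝ} {x : E} (hf : HasFDerivAt f f' x) (h : E) :
    fderiv ℝ (fun y => 1 / 2 * (f y ⬝ᵥ (Γ *ᵥ f y) + c)) x h = f' h ⬝ᵥ (Γ *ᵥ f x) := by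
  have hΓf :
      HasFDerivAt (fun y => Γ *ᵥ f y) ((Matrix.mulVecLin Γ).toContinuousLinearMap.comp f') x :=
    (Matrix.mulVecLin Γ).toContinuousLinearMap.hasFDerivAt.comp x hf
  rw [(((hasFDerivAt_dotProduct hf hΓf).add_const c).const_mul (1 / 2)).fderiv]
  have hsymm : f x ⬝ᵥ (Γ *ᵥ f' h) = f' h ⬝ᵥ (Γ *ᵥ f x) := by
    rw [dotProduct_mulVec, ← vecMul_transpose, hΓ.eq, dotProduct_comm]
  simp only [_root_.smul_apply, _root_.sum_apply, _root_.add_apply,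
    ContinuousLinearMap.comp_apply, ContinuousLinearMap.proj_apply,
    LinearMap.coe_toContinuousLinearMap', Matrix.mulVecLin_apply, smul_eq_mul,
    Finset.sum_add_distrib]
  change 1 / 2 * (f x ⬝ᵥ (Γ *ᵥ f' h) + (Γ *ᵥ f x) ⬝ᵥ f' h) = _
  rw [hsymm, dotProduct_comm (Γ *ᵥ f x)]
  ring

theorem fderiv_fderiv_apply_comm {g : E → ℝ} (hg : ContDiff ℝ 2 g) (x v w : E) :
    fderiv ℝ (fun z => fderiv ℝ g z v) x w = fderiv ℝ (fun z => fderiv ℝ g z w) x v := by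
  have hd : DifferentiableAt ℝ (fderiv ℝ g) x :=
    ((hg.fderiv_right (m := 1) (by norm_num)).differentiable one_ne_zero).differentiableAt
  have hflip : ∀ a : E, fderiv ℝ (fun z => fderiv ℝ g z a) x = (fderiv ℝ (fderiv ℝ g) x).flip a :=
    fun a => by simp [fderiv_clm_apply hd (differentiableAt_const a)]
  rw [hflip v, hflip w]
  exact hg.contDiffAt.isSymmSndFDerivAt (by norm_num) w v

end Derivatives

section StageGame

def inputEmbedding : Inp N m →L[ℝ] (Ix nx N m → ℝ) :=
  LinearMap.toContinuousLinearMap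
    { toFun := fun w => Sum.elim 0 (Sum.elim 0 w)
      map_add' := fun v w => by ext (_ | _ | _) <;> simp
      map_smul' := fun c w => by ext (_ | _ | _) <;> simp }

theorem hasFDerivAt_vec1 (δx : Stt nx) (δu : Inp N m) :
    HasFDerivAt (vec1 δx) (inputEmbedding : Inp N m →L[ℝ] _) δu := by
  have hvec1 : (vec1 δx : Inp N m → _) = fun w => vec1 δx 0 + inputEmbedding w := by
    ext w (_ | _ | _) <;> simp [vec1, inputEmbedding]
  rw [hvec1]
  exact inputEmbedding.hasFDerivAt.const_add _

theorem inputEmbedding_single_dotProduct (p : UIdx N m) (y : Ix nx N m → ℝ) :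
    inputEmbedding (Pi.single p 1) ⬝ᵥ y = y (Sum.inr (Sum.inr p)) := by
  simp [inputEmbedding, dotProduct, Pi.single_apply]

theorem fderiv_stageCost_single {Γ : Matrix (Ix nx N m) (Ix nx N m) ℝ} (hΓ : Γ.IsSymm)
    (c : ℝ) (δx : Stt nx) (δu : Inp N m) (p : UIdx N m) :
    fderiv ℝ (fun w => 1 / 2 * (vec1 δx w ⬝ᵥ (Γ *ᵥ vec1 δx w) + c)) δu (Pi.single p 1)
      = (Γ *ᵥ vec1 δx δu) (Sum.inr (Sum.inr p)) := by
  rw [fderiv_half_quadForm_apply hΓ c (hasFDerivAt_vec1 δx δu), inputEmbedding_single_dotProduct]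

theorem mulVec_vec1_inr_inr (Γ : Fin N → Matrix (Ix nx N m) (Ix nx N m) ℝ) (δx : Stt nx)
    (δu : Inp N m) (p : UIdx N m) :
    (Γ p.1 *ᵥ vec1 δx δu) (Sum.inr (Sum.inr p))
      = (Fof Γ *ᵥ δu + (Pof Γ *ᵥ δx + Hof Γ)) p := by
  simp only [Pi.add_apply, mulVec, dotProduct, Fintype.sum_sum_type, vec1, Fof, Pof, Hof,
    Sum.elim_inl, Sum.elim_inr, mul_one, Finset.univ_unique, Finset.sum_singleton]
  ring

theorem mulVec_add_eq_zero_iff {α ι κ : Type*} [CommRing α] [Fintype ι] [DecidableEq ι]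
    [Fintype κ] {F : Matrix ι ι α} (hF : IsUnit F) (Pm : Matrix ι κ α) (H : ι → α) (x : κ → α)
    (u : ι → α) :
    F *ᵥ u + (Pm *ᵥ x + H) = 0 ↔ u = -(F⁻¹ * Pm) *ᵥ x + -(F⁻¹ *ᵥ H) := by
  have hdet : IsUnit F.det := (isUnit_iff_isUnit_det F).1 hF
  rw [add_eq_zero_iff_eq_neg, neg_mulVec, ← mulVec_mulVec, ← neg_add, ← mulVec_add,
    ← mulVec_neg]
  constructor
  · intro h
    rw [← h, mulVec_mulVec, nonsing_inv_mul F hdet, one_mulVec]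
  · rintro rfl
    rw [mulVec_mulVec, mul_nonsing_inv F hdet, one_mulVec]

theorem stationary_iff_eq_policy {Γ : Fin N → Matrix (Ix nx N m) (Ix nx N m) ℝ}
    (hΓ : ∀ n, (Γ n).IsSymm) (hF : IsUnit (Fof Γ)) (c : Fin N → ℝ) (δx : Stt nx) (δu : Inp N m) :
    (∀ p : UIdx N m, fderiv ℝ (fun w => 1 / 2 * (vec1 δx w ⬝ᵥ (Γ p.1 *ᵥ vec1 δx w) + c p.1)) δu
        (Pi.single p 1) = 0) ↔ δu = Kof Γ *ᵥ δx + sof Γ := by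
  simp only [fderiv_stageCost_single (hΓ _), mulVec_vec1_inr_inr, Kof, sof]
  rw [← mulVec_add_eq_zero_iff hF, funext_iff]
  rfl

end StageGame

section Symmetry

variable (P : Setup T nx N m) (ub : Seq T N m)

theorem isSymm_Mmat {n : Fin N} {k : ℕ} (hc : ContDiff ℝ 2 (cpair P n k)) :
    (Mmat P ub n k).IsSymm := by
  refine IsSymm.ext fun a b => ?_
  rcases a with _ | w <;> rcases b with _ | w'
  · rfl
  · rfl
  · rfl
  · exact fderiv_fderiv_apply_comm hc (zbar P ub k) (zbasis w') (zbasis w)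

theorem isSymm_Gmat {k : ℕ} (hf : ContDiff ℝ 2 (fpair P k)) (l : Fin nx) :
    (Gmat P ub k l).IsSymm :=
  IsSymm.ext fun _ _ => fderiv_fderiv_apply_comm (contDiff_pi.1 hf l) (zbar P ub k) _ _

theorem isSymm_Dext {D : Matrix (ZIdx nx N m) (ZIdx nx N m) ℝ} (hD : D.IsSymm) :
    (Dext D).IsSymm := by
  refine IsSymm.ext fun a b => ?_
  rcases a with _ | w <;> rcases b with _ | w'
  · rfl
  · rfl
  · rfl
  · exact hD.apply w w'

theorem isSymm_gammaFam {S : Fin N → Matrix (Jx nx) (Jx nx) ℝ} {k : ℕ}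
    {D : Fin N → Matrix (ZIdx nx N m) (ZIdx nx N m) ℝ} {n : Fin N}
    (hc : ContDiff ℝ 2 (cpair P n k)) (hS : (S n).IsSymm) (hD : (D n).IsSymm) :
    (gammaFam P ub S k D n).IsSymm :=
  ((isSymm_Mmat P ub hc).add (hS.transpose_mul_mul _)).add (isSymm_Dext hD)

theorem isSymm_sum_smul_Gmat {k : ℕ} (hf : ContDiff ℝ 2 (fpair P k)) (ω : Fin nx → ℝ) :
    (∑ l, ω l • Gmat P ub k l).IsSymm :=
  isSymm_sum _ fun l _ => (isSymm_Gmat P ub hf l).smul (ω l)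

theorem isSymm_newtSAux (hf : ∀ k ≤ T, ContDiff ℝ 2 (fpair P k))
    (hc : ∀ n : Fin N, ∀ k ≤ T, ContDiff ℝ 2 (cpair P n k)) (j : ℕ) (n : Fin N) :
    (newtSAux P ub j n).IsSymm := by
  induction j generalizing n with
  | zero => exact isSymm_zero
  | succ j ih =>
    exact (isSymm_gammaFam P ub (hc _ _ (Nat.sub_le T j)) (ih _)
      (isSymm_sum_smul_Gmat P ub (hf _ (Nat.sub_le T j)) _)).transpose_mul_mul _

theorem isSymm_newtGamma (hf : ∀ k ≤ T, ContDiff ℝ 2 (fpair P k))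
    (hc : ∀ n : Fin N, ∀ k ≤ T, ContDiff ℝ 2 (cpair P n k)) {k : ℕ} (hk : k ≤ T) (n : Fin N) :
    (newtGamma P ub k n).IsSymm :=
  isSymm_gammaFam P ub (hc n k hk) (isSymm_newtSAux P ub hf hc _ n)
    (isSymm_sum_smul_Gmat P ub (hf k hk) _)

end Symmetry

section Bellman

theorem Cmat_mulVec_vec1 (A : Matrix (Fin nx) (Fin nx) ℝ) (B : Matrix (Fin nx) (UIdx N m) ℝ)
    (δx : Stt nx) (δu : Inp N m) :
    Cmat A B *ᵥ vec1 δx δu = vecj (A *ᵥ δx + B *ᵥ δu) := by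
  ext (_ | i) <;> simp [Cmat, vec1, vecj, mulVec, dotProduct, Fintype.sum_sum_type]

theorem Emat_mulVec_vecj (s : Inp N m) (K : Matrix (UIdx N m) (Fin nx) ℝ) (δx : Stt nx) :
    Emat s K *ᵥ vecj δx = vec1 δx (K *ᵥ δx + s) := by
  ext (_ | i | p) <;>
    simp [Emat, vec1, vecj, mulVec, dotProduct, Fintype.sum_sum_type, ite_mul, add_comm]

theorem vec1_dotProduct_Dext_mulVec (D : Matrix (ZIdx nx N m) (ZIdx nx N m) ℝ) (δx : Stt nx)
    (δu : Inp N m) :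
    vec1 δx δu ⬝ᵥ (Dext D *ᵥ vec1 δx δu) = Sum.elim δx δu ⬝ᵥ (D *ᵥ Sum.elim δx δu) := by
  simp [dotProduct, mulVec, Fintype.sum_sum_type, Dext, vec1]

variable (P : Setup T nx N m) (ub : Seq T N m)

theorem quadForm_gammaFam (S : Fin N → Matrix (Jx nx) (Jx nx) ℝ) (k : ℕ)
    (D : Fin N → Matrix (ZIdx nx N m) (ZIdx nx N m) ℝ) (n : Fin N) (δx : Stt nx) (δu : Inp N m) :
    vec1 δx δu ⬝ᵥ (gammaFam P ub S k D n *ᵥ vec1 δx δu)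
      = vec1 δx δu ⬝ᵥ (Mmat P ub n k *ᵥ vec1 δx δu)
        + vecj (Amat P ub k *ᵥ δx + Bmat P ub k *ᵥ δu) ⬝ᵥ
            (S n *ᵥ vecj (Amat P ub k *ᵥ δx + Bmat P ub k *ᵥ δu))
        + Sum.elim δx δu ⬝ᵥ (D n *ᵥ Sum.elim δx δu) := by
  rw [gammaFam, add_mulVec, add_mulVec, dotProduct_add, dotProduct_add,
    dotProduct_transpose_mul_mul_mulVec, Cmat_mulVec_vec1, vec1_dotProduct_Dext_mulVec]

theorem quadForm_subPolicy (Γ : Fin N → Matrix (Ix nx N m) (Ix nx N m) ℝ) (n : Fin N)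
    (δx : Stt nx) :
    vecj δx ⬝ᵥ (subPolicy Γ n *ᵥ vecj δx)
      = vec1 δx (Kof Γ *ᵥ δx + sof Γ) ⬝ᵥ (Γ n *ᵥ vec1 δx (Kof Γ *ᵥ δx + sof Γ)) := by
  rw [subPolicy, dotProduct_transpose_mul_mul_mulVec, Emat_mulVec_vecj]

-- The `Aux` recursions are indexed by the number `j` of remaining stages: stage `k` is `k + j = T`.

theorem newtVAux_succ {k j : ℕ} (hkj : k + j = T) (n : Fin N) (δx Δx : Stt nx) :
    newtVAux P ub (j + 1) n δx Δx
      = newtQ P ub k n δx Δx (newtK P ub k *ᵥ δx + newts P ub k) := by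
  rw [newtVAux, newtQ, show T - j = k by omega, show T - k = j by omega]

theorem newtSAux_succ {k j : ℕ} (hkj : k + j = T) :
    newtSAux P ub (j + 1) = subPolicy (newtGamma P ub k) := by
  rw [newtSAux, newtGamma, show T - j = k by omega, show T - k = j by omega]
  congr
  ext n
  rw [newtD, Omega, show T + 1 - (k + 1) = j by omega]

theorem newtQ_eq_of_newtVAux {k j : ℕ} (hkj : k + j = T) (n : Fin N)
    (hV : ∀ δx Δx, newtVAux P ub j n δx Δx
      = 1 / 2 * (vecj δx ⬝ᵥ (newtSAux P ub j n *ᵥ vecj δx) + omegaAux P ub n j ⬝ᵥ Δx))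
    (δx Δx : Stt nx) (δu : Inp N m) :
    newtQ P ub k n δx Δx δu
      = 1 / 2 * (vec1 δx δu ⬝ᵥ (newtGamma P ub k n *ᵥ vec1 δx δu) + Omega P ub n k ⬝ᵥ Δx) := by
  have hD : Sum.elim δx δu ⬝ᵥ (newtD P ub k n *ᵥ Sum.elim δx δu)
      = omegaAux P ub n j ⬝ᵥ Rquad P ub k δx δu := by
    rw [newtD, Omega, show T + 1 - (k + 1) = j by omega, dotProduct_sum_smul_mulVec]
    simp [dotProduct, Rquad]
  rw [newtQ, show T - k = j by omega, hV, newtGamma, show T - k = j by omega, quadForm_gammaFam,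
    hD, Omega, show T + 1 - k = j + 1 by omega, omegaAux, show T - j = k by omega,
    add_dotProduct, ← dotProduct_mulVec, dotProduct_add]
  ring

theorem newtVAux_eq {j : ℕ} (hj : j ≤ T + 1) (n : Fin N) (δx Δx : Stt nx) :
    newtVAux P ub j n δx Δx
      = 1 / 2 * (vecj δx ⬝ᵥ (newtSAux P ub j n *ᵥ vecj δx) + omegaAux P ub n j ⬝ᵥ Δx) := by
  induction j generalizing n δx Δx with
  | zero => simp [newtVAux, newtSAux, omegaAux]
  | succ j ih =>
    obtain ⟨k, hkj⟩ : ∃ k, k + j = T := ⟨T - j, by omega⟩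
    rw [newtVAux_succ P ub hkj, newtQ_eq_of_newtVAux P ub hkj n (ih (by omega) n),
      newtSAux_succ P ub hkj, quadForm_subPolicy, Omega, show T + 1 - k = j + 1 by omega]
    rfl

theorem newtQ_eq {k : ℕ} (hk : k ≤ T) (n : Fin N) (δx Δx : Stt nx) (δu : Inp N m) :
    newtQ P ub k n δx Δx δu
      = 1 / 2 * (vec1 δx δu ⬝ᵥ (newtGamma P ub k n *ᵥ vec1 δx δu) + Omega P ub n k ⬝ᵥ Δx) :=
  newtQ_eq_of_newtVAux P ub (Nat.add_sub_cancel' hk) n (newtVAux_eq P ub (by omega) n) δx Δx δu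

theorem newtV_eq (k : ℕ) (n : Fin N) (δx Δx : Stt nx) :
    newtV P ub k n δx Δx
      = 1 / 2 * (vecj δx ⬝ᵥ (newtSmat P ub k n *ᵥ vecj δx) + Omega P ub n k ⬝ᵥ Δx) :=
  newtVAux_eq P ub (by omega) n δx Δx

end Bellman

theorem statement11_general (T nx N : ℕ) (m : Fin N → ℕ) (P : Setup T nx N m)
    (hf : ∀ k ≤ T, ContDiff ℝ 2 (fpair P k))
    (hc : ∀ n : Fin N, ∀ k ≤ T, ContDiff ℝ 2 (cpair P n k))
    (ub : Seq T N m)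
    (hFinv : ∀ k ≤ T, IsUnit (newtF P ub k)) :
    ∀ k ≤ T,
      (∀ (n : Fin N) (δx Δx : Stt nx) (δu : Inp N m),
        newtQ P ub k n δx Δx δu
          = (1 / 2) * (vec1 δx δu ⬝ᵥ (newtGamma P ub k n *ᵥ vec1 δx δu)
              + Omega P ub n k ⬝ᵥ Δx)) ∧
      (∀ (n : Fin N) (δx Δx : Stt nx),
        newtV P ub k n δx Δx
          = (1 / 2) * (vecj δx ⬝ᵥ (newtSmat P ub k n *ᵥ vecj δx)
              + Omega P ub n k ⬝ᵥ Δx)) ∧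
      (∀ (δx Δx : Stt nx) (δu : Inp N m),
        (∀ p : UIdx N m,
          fderiv ℝ (fun w => newtQ P ub k p.1 δx Δx w) δu (Pi.single p 1) = 0) ↔
          δu = newtK P ub k *ᵥ δx + newts P ub k) := by
  intro k hk
  refine ⟨newtQ_eq P ub hk, newtV_eq P ub k, fun δx Δx δu => ?_⟩
  simp only [newtQ_eq P ub hk]
  exact stationary_iff_eq_policy (isSymm_newtGamma P ub hf hc hk) (hFinv k hk)
    (fun n => Omega P ub n k ⬝ᵥ Δx) δx δu

/-- the Bellman functions of the Newton dynamic game are the quadratic forms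
given by Γ_{n,k}, S_{n,k}, Ω_{n,k}, and for every (δx, Δx) the input δu = K_k δx + s_k is the
unique joint stationary point of the stage-k static game. -/
theorem statement11 (T nx N : ℕ) (m : Fin N → ℕ) (hnx : 1 ≤ nx) (P : Setup T nx N m)
    (hf : ∀ k ≤ T, ContDiff ℝ 2 (fpair P k))
    (hc : ∀ n : Fin N, ∀ k ≤ T, ContDiff ℝ 2 (cpair P n k))
    (ub : Seq T N m)
    (hFinv : ∀ k ≤ T, IsUnit (newtF P ub k)) :
    ∀ k ≤ T,
      (∀ (n : Fin N) (δx Δx : Stt nx) (δu : Inp N m),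
        newtQ P ub k n δx Δx δu
          = (1 / 2) * (vec1 δx δu ⬝ᵥ (newtGamma P ub k n *ᵥ vec1 δx δu)
              + Omega P ub n k ⬝ᵥ Δx)) ∧
      (∀ (n : Fin N) (δx Δx : Stt nx),
        newtV P ub k n δx Δx
          = (1 / 2) * (vecj δx ⬝ᵥ (newtSmat P ub k n *ᵥ vecj δx)
              + Omega P ub n k ⬝ᵥ Δx)) ∧
      (∀ (δx Δx : Stt nx) (δu : Inp N m),
        (∀ p : UIdx N m,
          fderiv ℝ (fun w => newtQ P ub k p.1 δx Δx w) δu (Pi.single p 1) = 0) ↔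
          δu = newtK P ub k *ᵥ δx + newts P ub k) :=
  statement11_general T nx N m P hf hc ub hFinv

end DynGame
end
end
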